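/- arXiv:2112.06781 — 9 statements merged into one kernel-verified Lean document; each statement's English description precedes it below -/
import Mathlib

section
/- If X is a proper metric space (every closed ball is compact) with finite geodesic defect ν(X), then X is ν(X)-geodesic, i.e., the infimum in the definition of the geodesic defect is attained. -/
def IsGeodesicWithDefect (X : Type*) [MetricSpace X] (ν : ℝ) : Prop :=
  ∀ x y : X, ∀ r s : ℝ, 0 ≤ r → 0 ≤ s → r + s = dist x y →
    ∃ z : X, dist x z ≤ r + ν ∧ dist y z ≤ s + ν

noncomputable def geodesicDefect (X : Type*) [MetricSpace X] : EReal :=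
  sInf {n : EReal | ∃ ν : ℝ, 0 ≤ ν ∧ IsGeodesicWithDefect X ν ∧ n = (ν : EReal)}

/-!
The defect is an infimum, so `X` is `ν`-geodesic for every `ν` above it. For fixed `x, y, r, s`,
the continuous function `z ↦ max (d(x,z) - r) (d(y,z) - s)` attains its minimum on a compact ball
around `x`; that minimum is then at most every such `ν`, hence at most the defect itself.
-/

section GeodesicDefect

variable {X : Type*} [MetricSpace X]

theorem IsGeodesicWithDefect.mono {ν ν' : ℝ} (h : IsGeodesicWithDefect X ν) (hle : ν ≤ ν') :
    IsGeodesicWithDefect X ν' := by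
  intro x y r s hr hs hrs
  obtain ⟨z, hxz, hyz⟩ := h x y r s hr hs hrs
  exact ⟨z, by linarith, by linarith⟩

theorem geodesicDefect_nonneg (X : Type*) [MetricSpace X] : 0 ≤ geodesicDefect X :=
  le_sInf <| by
    rintro _ ⟨ν, hν, -, rfl⟩
    exact_mod_cast hν

theorem isGeodesicWithDefect_of_geodesicDefect_lt {ν : ℝ} (h : geodesicDefect X < ν) :
    IsGeodesicWithDefect X ν := by
  obtain ⟨_, ⟨ν₁, -, hgeo, rfl⟩, hlt⟩ := sInf_lt_iff.mp h
  exact hgeo.mono (EReal.coe_lt_coe_iff.mp hlt).le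

theorem isGeodesicWithDefect_of_forall_gt [ProperSpace X] {ν : ℝ}
    (h : ∀ ν' > ν, IsGeodesicWithDefect X ν') : IsGeodesicWithDefect X ν := by
  intro x y r s hr hs hrs
  set f : X → ℝ := fun z => max (dist x z - r) (dist y z - s)
  set K := Metric.closedBall x (r + ν + 1)
  have hxK : x ∈ K := by
    obtain ⟨z, hxz, -⟩ := h (ν + 1) (by linarith) x y r s hr hs hrs
    exact Metric.mem_closedBall_self (by linarith [dist_nonneg (x := x) (y := z)])
  obtain ⟨w, -, hw⟩ := (isCompact_closedBall x (r + ν + 1)).exists_isMinOn ⟨x, hxK⟩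
    (by fun_prop : Continuous f).continuousOn
  have hfw : f w ≤ ν := by
    refine le_of_forall_gt_imp_ge_of_dense fun c hc => ?_
    obtain ⟨z, hxz, hyz⟩ := h (min c (ν + 1)) (lt_min hc (by linarith)) x y r s hr hs hrs
    have hzK : z ∈ K := by
      rw [Metric.mem_closedBall, dist_comm]
      linarith [min_le_right c (ν + 1)]
    calc f w ≤ f z := hw hzK
      _ ≤ min c (ν + 1) := max_le (by linarith) (by linarith)
      _ ≤ c := min_le_left _ _
  obtain ⟨hxw, hyw⟩ := max_le_iff.mp hfw
  exact ⟨w, by linarith, by linarith⟩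

end GeodesicDefect

/-- In a proper metric space with finite geodesic defect, the infimum in the
definition of the geodesic defect is attained: `X` is `ν(X)`-geodesic. -/
theorem stmt2 (X : Type*) [MetricSpace X] [ProperSpace X]
    (hfin : geodesicDefect X ≠ ⊤) :
    IsGeodesicWithDefect X (geodesicDefect X).toReal := by
  have hcoe : ((geodesicDefect X).toReal : EReal) = geodesicDefect X :=
    EReal.coe_toReal hfin (ne_bot_of_le_ne_bot EReal.zero_ne_bot (geodesicDefect_nonneg X))
  refine isGeodesicWithDefect_of_forall_gt fun ν hν => isGeodesicWithDefect_of_geodesicDefect_lt ?_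
  rw [← hcoe]
  exact_mod_cast hν
end

section
/- Let X and Y be metric spaces, let C ⊆ X × Y be a correspondence (surjective onto both factors) with distortion dis(C) ≤ 2s, and suppose X is ν-geodesic. Then Y is (ν+3s)-geodesic. Consequently, |ν(X) − ν(Y)| ≤ 3·d_GH(X,Y). -/
/-- A correspondence between `X` and `Y`: a relation surjective onto both factors. -/
def IsCorrespondence (X Y : Type*) (C : Set (X × Y)) : Prop :=
  (∀ x : X, ∃ y : Y, (x, y) ∈ C) ∧ (∀ y : Y, ∃ x : X, (x, y) ∈ C)

/-- The distortion of `C` is at most `t`. -/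
def DistortionLE {X Y : Type*} [MetricSpace X] [MetricSpace Y]
    (C : Set (X × Y)) (t : ℝ) : Prop :=
  ∀ p ∈ C, ∀ q ∈ C, |dist p.1 q.1 - dist p.2 q.2| ≤ t

/-- The set of `s` such that some correspondence has distortion at most `2s`;
its infimum is the Gromov–Hausdorff distance between `X` and `Y`. -/
def ghSet (X Y : Type*) [MetricSpace X] [MetricSpace Y] : Set ℝ :=
  {s | ∃ C : Set (X × Y), IsCorrespondence X Y C ∧ DistortionLE C (2 * s)}

/-!
Given `y₁, y₂ ∈ Y` and a split `r + t = d(y₁, y₂)`, choose partners `x₁, x₂ ∈ X`. Their distance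
is within `2s` of `r + t`, so it splits into two pieces within `s` of `r` and of `t`. A point `z`
realising that split up to `ν` has a partner `w ∈ Y`, and the distortion bound moves the
estimates back to `Y` at a further cost of `2s`: in total `ν + 3s`.

Applying this to all defects of `X` and all correspondences, and symmetrically with the roles of
`X` and `Y` exchanged, bounds `|ν(X) − ν(Y)|` by `3 d_GH(X, Y)`.
-/

open Set

theorem EReal.le_sInf_add_csInf {c : EReal} {S : Set EReal} {T : Set ℝ} (hT : T.Nonempty)
    (h : ∀ a ∈ S, ∀ t ∈ T, c ≤ a + t) : c ≤ sInf S + (sInf T : ℝ) := by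
  refine EReal.le_add_of_forall_gt (.inr (EReal.coe_ne_top _)) (.inr (EReal.coe_ne_bot _))
    fun a' ha' b' hb' => ?_
  obtain ⟨a, haS, haa'⟩ := sInf_lt_iff.1 ha'
  obtain ⟨q, hq, hqb'⟩ := EReal.lt_iff_exists_real_btwn.1 hb'
  obtain ⟨t, htT, htq⟩ := exists_lt_of_csInf_lt hT (EReal.coe_lt_coe_iff.1 hq)
  calc c ≤ a + t := h a haS t htT
    _ ≤ a' + b' := add_le_add haa'.le ((EReal.coe_lt_coe_iff.2 htq).trans hqb').le

theorem IsCorrespondence.swap {X Y : Type*} {C : Set (X × Y)} (hC : IsCorrespondence X Y C) :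
    IsCorrespondence Y X (Prod.swap ⁻¹' C) :=
  ⟨hC.2, hC.1⟩

section

variable {X Y : Type*} [MetricSpace X] [MetricSpace Y]

theorem DistortionLE.swap {C : Set (X × Y)} {t : ℝ} (hC : DistortionLE C t) :
    DistortionLE (Prod.swap ⁻¹' C) t := fun p hp q hq => by
  simpa [abs_sub_comm] using hC _ hp _ hq

theorem DistortionLE.nonneg {C : Set (X × Y)} {t : ℝ} (hC : DistortionLE C t) {p : X × Y}
    (hp : p ∈ C) : 0 ≤ t := by
  simpa using hC p hp p hp

theorem ghSet_subset_swap : ghSet X Y ⊆ ghSet Y X := fun _ ⟨C, hC, hdis⟩ =>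
  ⟨Prod.swap ⁻¹' C, hC.swap, hdis.swap⟩

theorem ghSet_comm : ghSet X Y = ghSet Y X :=
  ghSet_subset_swap.antisymm ghSet_subset_swap

theorem IsGeodesicWithDefect.nonneg [Nonempty X] {ν : ℝ} (h : IsGeodesicWithDefect X ν) :
    0 ≤ ν := by
  obtain ⟨x⟩ := ‹Nonempty X›
  obtain ⟨z, hz, -⟩ := h x x 0 0 le_rfl le_rfl (by simp)
  linarith [dist_nonneg (x := x) (y := z)]

theorem geodesicDefect_le [Nonempty X] {ν : ℝ} (h : IsGeodesicWithDefect X ν) :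
    geodesicDefect X ≤ ν :=
  sInf_le ⟨ν, h.nonneg, h, rfl⟩

theorem geodesicDefect_of_isEmpty [IsEmpty X] : geodesicDefect X = 0 :=
  le_antisymm (sInf_le ⟨0, le_rfl, fun x => isEmptyElim x, rfl⟩)
    (le_sInf <| by rintro _ ⟨ν, hν, -, rfl⟩; exact_mod_cast hν)

theorem IsGeodesicWithDefect.of_correspondence {ν s : ℝ} {C : Set (X × Y)}
    (hX : IsGeodesicWithDefect X ν) (hC : IsCorrespondence X Y C)
    (hdis : DistortionLE C (2 * s)) : IsGeodesicWithDefect Y (ν + 3 * s) := by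
  intro y₁ y₂ r t hr ht hrt
  obtain ⟨x₁, h₁⟩ := hC.2 y₁
  obtain ⟨x₂, h₂⟩ := hC.2 y₂
  have hs : 0 ≤ s := by linarith [hdis.nonneg h₁]
  have hD : |dist x₁ x₂ - dist y₁ y₂| ≤ 2 * s := hdis _ h₁ _ h₂
  rw [abs_le] at hD
  set r' := max 0 (dist x₁ x₂ - t - s)
  have hr' : r' ≤ r + s := max_le (by linarith) (by linarith)
  have ht' : dist x₁ x₂ - r' ≤ t + s := by linarith [le_max_right 0 (dist x₁ x₂ - t - s)]
  obtain ⟨z, hz₁, hz₂⟩ := hX x₁ x₂ r' (dist x₁ x₂ - r') (le_max_left _ _)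
    (sub_nonneg.2 (max_le dist_nonneg (by linarith))) (by ring)
  obtain ⟨w, hw⟩ := hC.1 z
  have hw₁ : |dist x₁ z - dist y₁ w| ≤ 2 * s := hdis _ h₁ _ hw
  have hw₂ : |dist x₂ z - dist y₂ w| ≤ 2 * s := hdis _ h₂ _ hw
  rw [abs_le] at hw₁ hw₂
  exact ⟨w, by linarith, by linarith⟩

theorem geodesicDefect_le_add_ghSet (hne : (ghSet X Y).Nonempty) :
    geodesicDefect Y ≤ geodesicDefect X + ((3 * sInf (ghSet X Y) : ℝ) : EReal) := by
  rcases isEmpty_or_nonempty Y with hY | hY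
  · obtain ⟨-, C₀, hC₀, -⟩ := hne
    have : IsEmpty X := ⟨fun x => (hC₀.1 x).elim fun y _ => isEmptyElim y⟩
    -- between empty spaces every `s` is admissible, and `sInf univ = 0` by Mathlib's convention
    have hgh : ghSet X Y = univ := eq_univ_of_forall fun _ =>
      ⟨∅, ⟨isEmptyElim, isEmptyElim⟩, fun _ hp => hp.elim⟩
    simp [geodesicDefect_of_isEmpty, hgh]
  · rw [← smul_eq_mul, ← Real.sInf_smul_of_nonneg zero_le_three]
    refine EReal.le_sInf_add_csInf hne.smul_set ?_
    rintro _ ⟨ν, -, hX, rfl⟩ _ ⟨s, ⟨C, hC, hdis⟩, rfl⟩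
    simpa only [smul_eq_mul, EReal.coe_add] using geodesicDefect_le (hX.of_correspondence hC hdis)

end

theorem stmt3_general (X Y : Type*) [MetricSpace X] [MetricSpace Y] (ν s : ℝ)
    (C : Set (X × Y)) (hC : IsCorrespondence X Y C)
    (hdis : DistortionLE C (2 * s)) (hX : IsGeodesicWithDefect X ν) :
    IsGeodesicWithDefect Y (ν + 3 * s) ∧
      geodesicDefect Y ≤ geodesicDefect X + ((3 * sInf (ghSet X Y) : ℝ) : EReal) ∧
      geodesicDefect X ≤ geodesicDefect Y + ((3 * sInf (ghSet X Y) : ℝ) : EReal) := by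
  have hne : (ghSet X Y).Nonempty := ⟨s, C, hC, hdis⟩
  refine ⟨hX.of_correspondence hC hdis, geodesicDefect_le_add_ghSet hne, ?_⟩
  rw [ghSet_comm] at hne ⊢
  exact geodesicDefect_le_add_ghSet hne

/-- If `C` is a correspondence with distortion `≤ 2s` and `X` is `ν`-geodesic, then `Y`
is `(ν + 3s)`-geodesic. Consequently `|ν(X) − ν(Y)| ≤ 3 · d_GH(X,Y)`. -/
theorem stmt3 (X Y : Type*) [MetricSpace X] [MetricSpace Y] (ν s : ℝ)
    (hν : 0 ≤ ν) (hs : 0 ≤ s) (C : Set (X × Y)) (hC : IsCorrespondence X Y C)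
    (hdis : DistortionLE C (2 * s)) (hX : IsGeodesicWithDefect X ν) :
    IsGeodesicWithDefect Y (ν + 3 * s) ∧
      geodesicDefect Y ≤ geodesicDefect X + ((3 * sInf (ghSet X Y) : ℝ) : EReal) ∧
      geodesicDefect X ≤ geodesicDefect Y + ((3 * sInf (ghSet X Y) : ℝ) : EReal) :=
  stmt3_general X Y ν s C hC hdis hX
end

section
/- Let X be a ν-geodesic metric space and let 2ν < t < u. Then the map induced by inclusion on first simplicial homology H₁(VR_t(X)) → H₁(VR_u(X)) of Vietoris–Rips complexes is surjective. -/
/-- The simplicial boundary map from 1-chains (ℤ-linear combinations of ordered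
edges) to 0-chains: `∂(x,y) = y − x`. -/
noncomputable def vrBoundary1 (X : Type*) : ((X × X) →₀ ℤ) →ₗ[ℤ] (X →₀ ℤ) :=
  Finsupp.lsum ℤ fun p =>
    (Finsupp.lsingle p.2 : ℤ →ₗ[ℤ] (X →₀ ℤ)) - Finsupp.lsingle p.1

/-- The simplicial boundary map from 2-chains (ℤ-linear combinations of ordered
triangles) to 1-chains: `∂(x,y,z) = (y,z) − (x,z) + (x,y)`. -/
noncomputable def vrBoundary2 (X : Type*) : ((X × X × X) →₀ ℤ) →ₗ[ℤ] ((X × X) →₀ ℤ) :=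
  Finsupp.lsum ℤ fun p =>
    (Finsupp.lsingle (p.2.1, p.2.2) : ℤ →ₗ[ℤ] ((X × X) →₀ ℤ))
      - Finsupp.lsingle (p.1, p.2.2) + Finsupp.lsingle (p.1, p.2.1)

/-- A 1-chain is supported in `VR_t(X)` if all its edges have length `≤ t`. -/
def ChainIn1 {X : Type*} [MetricSpace X] (t : ℝ) (c : (X × X) →₀ ℤ) : Prop :=
  ∀ p ∈ c.support, dist p.1 p.2 ≤ t

/-- A 2-chain is supported in `VR_t(X)` if all its triangles have diameter `≤ t`. -/
def ChainIn2 {X : Type*} [MetricSpace X] (t : ℝ) (b : (X × X × X) →₀ ℤ) : Prop :=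
  ∀ p ∈ b.support, dist p.1 p.2.1 ≤ t ∧ dist p.1 p.2.2 ≤ t ∧ dist p.2.1 p.2.2 ≤ t

/-!
Subdividing every edge `(x, y)` of a 1-chain at an approximate midpoint `m` (with
`d(x, m), d(m, y) ≤ d(x, y) / 2 + ν`) changes it by the boundary of the triangles `(x, m, y)`,
which lie in `VR_u(X)` as long as `2ν ≤ u`. One subdivision maps edge lengths `ℓ ↦ ℓ / 2 + ν`,
a contraction with fixed point `2ν`, so after `k` steps every edge has length at most
`2ν + (u - 2ν) / 2 ^ k`, which is `≤ t` for large `k` because `2ν < t`.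
-/

open Finsupp

section Chains

variable {X : Type*}

theorem vrBoundary1_single (p : X × X) (n : ℤ) :
    vrBoundary1 X (single p n) = single p.2 n - single p.1 n := by
  simp [vrBoundary1]

theorem vrBoundary2_single (p : X × X × X) (n : ℤ) :
    vrBoundary2 X (single p n) =
      single (p.2.1, p.2.2) n - single (p.1, p.2.2) n + single (p.1, p.2.1) n := by
  simp [vrBoundary2]

theorem vrBoundary1_comp_vrBoundary2 : vrBoundary1 X ∘ₗ vrBoundary2 X = 0 := by
  refine lhom_ext fun p n => ?_
  simp only [LinearMap.comp_apply, vrBoundary2_single, map_add, map_sub, vrBoundary1_single,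
    LinearMap.zero_apply]
  abel

variable [MetricSpace X]

theorem ChainIn1.mono {s s' : ℝ} {c : (X × X) →₀ ℤ} (hc : ChainIn1 s c) (hss' : s ≤ s') :
    ChainIn1 s' c :=
  fun p hp => (hc p hp).trans hss'

theorem ChainIn2.zero (s : ℝ) : ChainIn2 s (0 : (X × X × X) →₀ ℤ) := by
  simp [ChainIn2]

theorem ChainIn2.add {s : ℝ} {b b' : (X × X × X) →₀ ℤ} (hb : ChainIn2 s b)
    (hb' : ChainIn2 s b') : ChainIn2 s (b + b') := by
  classical
  intro p hp
  rcases Finset.mem_union.mp (support_add hp) with h | h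
  exacts [hb p h, hb' p h]

theorem ChainIn2.mono {s s' : ℝ} {b : (X × X × X) →₀ ℤ} (hb : ChainIn2 s b) (hss' : s ≤ s') :
    ChainIn2 s' b := by
  intro p hp
  obtain ⟨h₁, h₂, h₃⟩ := hb p hp
  exact ⟨h₁.trans hss', h₂.trans hss', h₃.trans hss'⟩

def HomologousIn (s : ℝ) (c c' : (X × X) →₀ ℤ) : Prop :=
  ∃ b : (X × X × X) →₀ ℤ, ChainIn2 s b ∧ c - c' = vrBoundary2 X b

theorem HomologousIn.refl (s : ℝ) (c : (X × X) →₀ ℤ) : HomologousIn s c c :=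
  ⟨0, ChainIn2.zero s, by simp⟩

theorem HomologousIn.trans {s : ℝ} {c c' c'' : (X × X) →₀ ℤ} (h : HomologousIn s c c')
    (h' : HomologousIn s c' c'') : HomologousIn s c c'' := by
  obtain ⟨b, hb, hcc'⟩ := h
  obtain ⟨b', hb', hc'c''⟩ := h'
  refine ⟨b + b', hb.add hb', ?_⟩
  rw [map_add, ← hcc', ← hc'c'']
  abel

theorem HomologousIn.mono {s s' : ℝ} {c c' : (X × X) →₀ ℤ} (h : HomologousIn s c c')
    (hss' : s ≤ s') : HomologousIn s' c c' :=
  let ⟨b, hb, hcc'⟩ := h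
  ⟨b, hb.mono hss', hcc'⟩

theorem HomologousIn.vrBoundary1_eq {s : ℝ} {c c' : (X × X) →₀ ℤ} (h : HomologousIn s c c') :
    vrBoundary1 X c = vrBoundary1 X c' := by
  obtain ⟨b, -, hcc'⟩ := h
  rw [← sub_eq_zero, ← map_sub, hcc', ← LinearMap.comp_apply, vrBoundary1_comp_vrBoundary2,
    LinearMap.zero_apply]

end Chains

namespace IsGeodesicWithDefect

variable {X : Type*} [MetricSpace X] {ν : ℝ} (hgeo : IsGeodesicWithDefect X ν)

noncomputable def midpoint (x y : X) : X :=
  (hgeo x y (dist x y / 2) (dist x y / 2) (by positivity) (by positivity) (by ring)).choose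

theorem dist_midpoint_left_le (x y : X) : dist x (hgeo.midpoint x y) ≤ dist x y / 2 + ν :=
  (hgeo x y _ _ (by positivity) (by positivity) (by ring)).choose_spec.1

theorem dist_midpoint_right_le (x y : X) : dist (hgeo.midpoint x y) y ≤ dist x y / 2 + ν :=
  dist_comm y _ ▸ (hgeo x y _ _ (by positivity) (by positivity) (by ring)).choose_spec.2

noncomputable def subdivide : ((X × X) →₀ ℤ) →ₗ[ℤ] ((X × X) →₀ ℤ) :=
  lmapDomain ℤ ℤ (fun p => (p.1, hgeo.midpoint p.1 p.2)) +
    lmapDomain ℤ ℤ (fun p => (hgeo.midpoint p.1 p.2, p.2))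

noncomputable def subdivisionFiller : ((X × X) →₀ ℤ) →ₗ[ℤ] ((X × X × X) →₀ ℤ) :=
  lmapDomain ℤ ℤ (fun p => (p.1, hgeo.midpoint p.1 p.2, p.2))

theorem vrBoundary2_subdivisionFiller (c : (X × X) →₀ ℤ) :
    vrBoundary2 X (hgeo.subdivisionFiller c) = hgeo.subdivide c - c := by
  suffices vrBoundary2 X ∘ₗ hgeo.subdivisionFiller = hgeo.subdivide - LinearMap.id from
    LinearMap.congr_fun this c
  refine lhom_ext fun p n => ?_
  simp only [subdivisionFiller, subdivide, LinearMap.comp_apply, LinearMap.sub_apply,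
    LinearMap.add_apply, LinearMap.id_apply, lmapDomain_apply, mapDomain_single,
    vrBoundary2_single]
  abel

theorem chainIn1_subdivide {s : ℝ} {c : (X × X) →₀ ℤ} (hc : ChainIn1 s c) :
    ChainIn1 (s / 2 + ν) (hgeo.subdivide c) := by
  classical
  intro q hq
  simp only [subdivide, LinearMap.add_apply, lmapDomain_apply] at hq
  rcases Finset.mem_union.mp (support_add hq) with h | h <;>
    obtain ⟨p, hp, rfl⟩ := Finset.mem_image.mp (mapDomain_support h)
  · linarith [hgeo.dist_midpoint_left_le p.1 p.2, hc p hp]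
  · linarith [hgeo.dist_midpoint_right_le p.1 p.2, hc p hp]

theorem chainIn2_subdivisionFiller {s : ℝ} {c : (X × X) →₀ ℤ} (hc : ChainIn1 s c)
    (hνs : 2 * ν ≤ s) : ChainIn2 s (hgeo.subdivisionFiller c) := by
  classical
  intro q hq
  obtain ⟨p, hp, rfl⟩ := Finset.mem_image.mp (mapDomain_support hq)
  have hp' := hc p hp
  exact ⟨by linarith [hgeo.dist_midpoint_left_le p.1 p.2], hp',
    by linarith [hgeo.dist_midpoint_right_le p.1 p.2]⟩

theorem homologousIn_subdivide {s : ℝ} {c : (X × X) →₀ ℤ} (hc : ChainIn1 s c)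
    (hνs : 2 * ν ≤ s) : HomologousIn s c (hgeo.subdivide c) :=
  ⟨-hgeo.subdivisionFiller c, by simpa [ChainIn2] using hgeo.chainIn2_subdivisionFiller hc hνs,
    by rw [map_neg, vrBoundary2_subdivisionFiller, neg_sub]⟩

theorem iterate_subdivide {s : ℝ} {c : (X × X) →₀ ℤ} (hc : ChainIn1 s c) (hνs : 2 * ν ≤ s)
    (k : ℕ) : ChainIn1 (2 * ν + (s - 2 * ν) / 2 ^ k) (hgeo.subdivide^[k] c) ∧
      HomologousIn s c (hgeo.subdivide^[k] c) := by
  induction k with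
  | zero => exact ⟨by simpa using hc, .refl s c⟩
  | succ k ih =>
    obtain ⟨hck, hhom⟩ := ih
    have hsk : 2 * ν + (s - 2 * ν) / 2 ^ k ≤ s := by
      have : (s - 2 * ν) / 2 ^ k ≤ s - 2 * ν :=
        div_le_self (by linarith) (one_le_pow₀ one_le_two)
      linarith
    rw [Function.iterate_succ_apply']
    refine ⟨(hgeo.chainIn1_subdivide hck).mono (le_of_eq (by ring)), hhom.trans ?_⟩
    have hνsk : 2 * ν ≤ 2 * ν + (s - 2 * ν) / 2 ^ k :=
      le_add_of_nonneg_right (div_nonneg (by linarith) (by positivity))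
    exact (hgeo.homologousIn_subdivide hck hνsk).mono hsk

end IsGeodesicWithDefect

/-- For a `ν`-geodesic metric space `X` and `2ν < t < u`, the map
`H₁(VR_t(X)) → H₁(VR_u(X))` induced by inclusion is surjective: every 1-cycle of
`VR_u(X)` is homologous in `VR_u(X)` to a 1-cycle of `VR_t(X)`. -/
theorem stmt5 (X : Type*) [MetricSpace X] (ν t u : ℝ)
    (hgeo : IsGeodesicWithDefect X ν) (htν : 2 * ν < t) (htu : t < u)
    (c : (X × X) →₀ ℤ) (hc : ChainIn1 u c) (hcycle : vrBoundary1 X c = 0) :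
    ∃ (c' : (X × X) →₀ ℤ) (b : (X × X × X) →₀ ℤ),
      ChainIn1 t c' ∧ vrBoundary1 X c' = 0 ∧ ChainIn2 u b ∧
        c - c' = vrBoundary2 X b := by
  obtain ⟨n, hn⟩ : ∃ n : ℕ, (u - 2 * ν) / 2 ^ n < t - 2 * ν := by
    obtain ⟨n, hn⟩ := pow_unbounded_of_one_lt ((u - 2 * ν) / (t - 2 * ν)) one_lt_two
    exact ⟨n, (div_lt_comm₀ (by linarith) (by positivity)).mp hn⟩
  obtain ⟨hcn, hhom⟩ := hgeo.iterate_subdivide hc (by linarith) n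
  have hcycle' := hhom.vrBoundary1_eq
  obtain ⟨b, hb, hcb⟩ := hhom
  exact ⟨_, b, hcn.mono (by linarith), hcycle' ▸ hcycle, hb, hcb⟩
end

section
/- Let (V,d) be the metric space of vertices of a finite positively-weighted tree T with the path-length metric. Then the geodesic defect of V equals half the maximum edge length: ν(V) = (1/2)·max_{e ∈ E} l(e). -/
theorem geodesicDefect_eq_of_isLeast {X : Type*} [MetricSpace X] {c : ℝ}
    (h : IsLeast {ν | 0 ≤ ν ∧ IsGeodesicWithDefect X ν} c) : geodesicDefect X = c := by
  refine le_antisymm (sInf_le ⟨c, h.1.1, h.1.2, rfl⟩) (le_sInf ?_)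
  rintro _ ⟨ν, hν₀, hν, rfl⟩
  exact EReal.coe_le_coe_iff.mpr (h.2 ⟨hν₀, hν⟩)

open SimpleGraph

def IsPathLengthMetric {V : Type*} [MetricSpace V] (G : SimpleGraph V) (l : Sym2 V → ℝ) :
    Prop :=
  ∀ (x y : V) (p : G.Walk x y), p.IsPath → dist x y = (p.edges.map l).sum

namespace IsPathLengthMetric

variable {V : Type*} [MetricSpace V] {G : SimpleGraph V} {l : Sym2 V → ℝ}
  (hd : IsPathLengthMetric G l)
include hd

theorem dist_eq_of_adj {x y : V} (h : G.Adj x y) : dist x y = l s(x, y) := by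
  simpa [Path.singleton] using hd x y (Path.singleton h).1 (Path.singleton h).2

theorem nonneg_of_mem_edgeSet {e : Sym2 V} (he : e ∈ G.edgeSet) : 0 ≤ l e := by
  induction e using Sym2.ind with
  | _ x y => exact hd.dist_eq_of_adj (x := x) (y := y) he ▸ dist_nonneg

theorem dist_cons {x w y : V} (h : G.Adj x w) {p : G.Walk w y} (hp : (Walk.cons h p).IsPath) :
    dist x y = dist x w + dist w y := by
  rw [hd _ _ _ hp, hd _ _ _ hp.of_cons, hd.dist_eq_of_adj h]
  simp

theorem dist_eq_add_of_mem_support [DecidableEq V] {x y u : V} {p : G.Walk x y}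
    (hp : p.IsPath) (hu : u ∈ p.support) : dist x y = dist x u + dist u y := by
  rw [hd _ _ _ hp, hd _ _ _ (hp.takeUntil hu), hd _ _ _ (hp.dropUntil hu),
    ← List.sum_append, ← List.map_append, ← Walk.edges_append, p.take_spec hu]

theorem exists_dist_le_of_isPath {M : ℝ} (hM : 0 ≤ M) (hle : ∀ e ∈ G.edgeSet, l e ≤ M)
    {x y : V} (p : G.Walk x y) (hp : p.IsPath) (r s : ℝ) (hr : 0 ≤ r) (hs : 0 ≤ s)
    (hrs : r + s = dist x y) : ∃ z, dist x z ≤ r + M / 2 ∧ dist y z ≤ s + M / 2 := by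
  induction p generalizing r with
  | @nil x => exact ⟨x, by simp; linarith, by simp; linarith⟩
  | @cons x w y h p ih =>
    have hxw : dist x w ≤ M := hd.dist_eq_of_adj h ▸ hle _ h
    have hxy := hd.dist_cons h hp
    by_cases hfar : dist x w ≤ r
    · obtain ⟨z, hxz, hyz⟩ := ih hp.of_cons (r - dist x w) (by linarith) (by linarith)
      exact ⟨z, by linarith [dist_triangle x w z], hyz⟩
    by_cases hnear : r ≤ dist x w / 2
    · exact ⟨x, by simp; linarith, by rw [_root_.dist_comm]; linarith⟩
    · exact ⟨w, by linarith, by rw [_root_.dist_comm]; linarith⟩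

theorem isGeodesicWithDefect (hc : G.Preconnected) {M : ℝ} (hM : 0 ≤ M)
    (hle : ∀ e ∈ G.edgeSet, l e ≤ M) : IsGeodesicWithDefect V (M / 2) := by
  classical
  intro x y r s hr hs hrs
  obtain ⟨p⟩ := hc x y
  exact hd.exists_dist_le_of_isPath hM hle p.toPath.1 p.toPath.2 r s hr hs hrs

theorem dist_le_max_of_adj (hc : G.Preconnected) {a b : V} (h : G.Adj a b) (z : V) :
    dist a b ≤ max (dist a z) (dist b z) := by
  classical
  obtain ⟨q⟩ := hc b z
  by_cases ha : a ∈ q.toPath.1.support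
  · have := hd.dist_eq_add_of_mem_support q.toPath.2 ha
    rw [_root_.dist_comm b a] at this
    exact le_max_of_le_right (by linarith [dist_nonneg (x := a) (y := z)])
  · have := hd.dist_cons h (q.toPath.2.cons ha)
    exact le_max_of_le_left (by linarith [dist_nonneg (x := b) (y := z)])

theorem le_two_mul_of_isGeodesicWithDefect (hc : G.Preconnected) {ν : ℝ}
    (hν : IsGeodesicWithDefect V ν) {e : Sym2 V} (he : e ∈ G.edgeSet) : l e ≤ 2 * ν := by
  induction e using Sym2.ind with
  | _ a b =>
    have hab := hd.dist_eq_of_adj (x := a) (y := b) he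
    obtain ⟨z, haz, hbz⟩ := hν a b (l s(a, b) / 2) (l s(a, b) / 2)
      (by linarith [hd.nonneg_of_mem_edgeSet he]) (by linarith [hd.nonneg_of_mem_edgeSet he])
      (by linarith)
    linarith [(hd.dist_le_max_of_adj hc he z).trans (max_le haz hbz)]

end IsPathLengthMetric

theorem stmt9_general (V : Type*) [MetricSpace V] [Fintype V]
    (G : SimpleGraph V) (l : Sym2 V → ℝ) (hT : G.IsTree)
    (hd : ∀ (x y : V) (p : G.Walk x y), p.IsPath → dist x y = (p.edges.map l).sum) :
    geodesicDefect V = (((1 / 2) * sSup (l '' G.edgeSet) : ℝ) : EReal) := by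
  have hd : IsPathLengthMetric G l := hd
  have hc := hT.connected.preconnected
  have hM : 0 ≤ sSup (l '' G.edgeSet) :=
    Real.sSup_nonneg (by rintro _ ⟨e, he, rfl⟩; exact hd.nonneg_of_mem_edgeSet he)
  refine geodesicDefect_eq_of_isLeast ⟨⟨by positivity, ?_⟩, fun ν ⟨hν₀, hν⟩ => ?_⟩
  · rw [one_div_mul_eq_div]
    exact hd.isGeodesicWithDefect hc hM fun e he =>
      le_csSup ((Set.toFinite _).image l).bddAbove ⟨e, he, rfl⟩
  · have : sSup (l '' G.edgeSet) ≤ 2 * ν := Real.sSup_le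
      (by rintro _ ⟨e, he, rfl⟩; exact hd.le_two_mul_of_isGeodesicWithDefect hc hν he)
      (by linarith)
    linarith

/-- For the vertex set of a finite positively weighted tree with the path-length
metric, the geodesic defect is half the maximum edge length. -/
theorem stmt9 (V : Type*) [MetricSpace V] [Fintype V] [Nonempty V]
    (G : SimpleGraph V) (l : Sym2 V → ℝ) (hT : G.IsTree)
    (hl : ∀ e ∈ G.edgeSet, 0 < l e)
    (hd : ∀ (x y : V) (p : G.Walk x y), p.IsPath → dist x y = (p.edges.map l).sum) :
    geodesicDefect V = (((1 / 2) * sSup (l '' G.edgeSet) : ℝ) : EReal) :=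
  stmt9_general V G l hT hd
end

section
/- Let (V,d) be a finite tree metric space, let r₁ < r₂ < … be the distinct positive pairwise distance values, and let e be an edge of the Vietoris–Rips complex VR_{r_m}(V) with diam e = r_m. Then e is contained in a unique maximal simplex Δ_e of VR_{r_m}(V) with diam Δ_e = r_m, namely the simplex spanned by B(x,r_m) ∩ B(y,r_m) where e = {x,y}. If e is a tree edge of length r_m, then Δ_e = e; if e is not a tree edge, then e is a proper face of Δ_e. -/
/-!
Distance is additive along paths of the tree. Cutting a path from `u` to `x` at its first vertex
`m` on the path `P` from `x` to `y` gives paths from `u` to `x` and to `y` through `m`, so `m` is a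
median of `x`, `y`, `u`. If `u`, `v` lie in `B(x,r) ∩ B(y,r)` with `r = d(x,y)` and have medians
`m₁`, `m₂` on `P`, with say `m₂` between `x` and `m₁`, then `d(m₂,v) ≤ d(m₂,x)` and
`d(u,v) ≤ d(u,m₁) + d(m₁,m₂) + d(m₂,x) = d(u,x) ≤ r`. Hence the intersection is a simplex, and it
obviously contains every simplex containing `x` and `y`. For a tree edge the medians are `x` or
`y`, which forces the intersection to be `{x, y}`; otherwise the second vertex of `P` lies in it.
-/

/-- The Vietoris–Rips complex at threshold `t`: nonempty finite subsets of
diameter at most `t`. -/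
def VRComplex (X : Type*) [MetricSpace X] (t : ℝ) : Set (Finset X) :=
  {σ | σ.Nonempty ∧ ∀ x ∈ σ, ∀ y ∈ σ, dist x y ≤ t}

namespace SimpleGraph

variable {V : Type*} {G : SimpleGraph V}

namespace Walk

lemma IsPath.append_of_support_inter {u v w : V} {p : G.Walk u v} {q : G.Walk v w}
    (hp : p.IsPath) (hq : q.IsPath) (h : ∀ z ∈ p.support, z ∈ q.support → z = v) :
    (p.append q).IsPath := by
  rw [isPath_def, support_append]
  refine hp.support_nodup.append hq.support_nodup.tail fun z hzp hzq ↦ ?_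
  have hv : v ∉ q.support.tail := by
    have := hq.support_nodup
    rw [← cons_tail_support] at this
    exact (List.nodup_cons.mp this).1
  exact hv (h z hzp (List.mem_of_mem_tail hzq) ▸ hzq)

/-- The walk from `u` is cut at its first vertex on `p`. -/
lemma exists_walk_meeting_support_once {x y u : V} (p : G.Walk x y)
    (q : G.Walk u x) :
    ∃ m ∈ p.support, ∃ r : G.Walk u m, ∀ z ∈ r.support, z ∈ p.support → z = m := by
  induction q with
  | nil => exact ⟨_, p.start_mem_support, nil, by simp⟩
  | @cons u w _ h q ih =>
    by_cases hu : u ∈ p.support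
    · exact ⟨u, hu, nil, by simp⟩
    obtain ⟨m, hm, r, hr⟩ := ih p
    refine ⟨m, hm, cons h r, fun z hz hzp ↦ ?_⟩
    rcases List.mem_cons.mp (support_cons h r ▸ hz) with rfl | hz
    · exact absurd hzp hu
    · exact hr z hz hzp

end Walk

end SimpleGraph

section PseudoMetric

variable {V : Type*} [PseudoMetricSpace V] {G : SimpleGraph V}

/-- For a tree with edge lengths this says that `dist` is the path-length metric. -/
def DistAddOnPaths (G : SimpleGraph V) : Prop :=
  ∀ ⦃a b : V⦄ (p : G.Walk a b), p.IsPath → ∀ c ∈ p.support, dist a b = dist a c + dist c b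

lemma distAddOnPaths_of_dist_eq_sum [DecidableEq V] {l : Sym2 V → ℝ}
    (hd : ∀ (x y : V) (p : G.Walk x y), p.IsPath → dist x y = (p.edges.map l).sum) :
    DistAddOnPaths G := by
  intro a b p hp c hc
  rw [hd a b p hp, hd a c _ (hp.takeUntil hc), hd c b _ (hp.dropUntil hc), ← List.sum_append,
    ← List.map_append, ← SimpleGraph.Walk.edges_append, p.take_spec hc]

namespace DistAddOnPaths

variable (hG : DistAddOnPaths G)
include hG

lemma exists_ne_mem_ball_inter_of_not_adj {x y : V} (hxy : G.Reachable x y) (hne : x ≠ y)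
    (hnadj : ¬G.Adj x y) :
    ∃ a, a ≠ x ∧ a ≠ y ∧ dist x a ≤ dist x y ∧ dist y a ≤ dist x y := by
  obtain ⟨p, hp⟩ := hxy.exists_isPath
  cases p with
  | nil => exact absurd rfl hne
  | @cons _ a _ h p =>
    have hxay := hG _ hp a (by simp)
    refine ⟨a, h.ne.symm, fun hay ↦ hnadj (hay ▸ h), ?_, ?_⟩
    · linarith [dist_nonneg (x := a) (y := y)]
    · linarith [dist_nonneg (x := x) (y := a), dist_comm y a]

section Connected

variable [DecidableEq V] (hconn : G.Connected)
include hconn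

lemma exists_median {x y : V} {p : G.Walk x y} (hp : p.IsPath) (u : V) :
    ∃ m ∈ p.support, dist x u = dist x m + dist m u ∧ dist y u = dist y m + dist m u := by
  obtain ⟨q⟩ := hconn u x
  obtain ⟨m, hm, r, hr⟩ := p.exists_walk_meeting_support_once q
  have hmeet {w : V} (s : G.Walk m w) (hs : s.support ⊆ p.support) :
      ∀ z ∈ r.bypass.support, z ∈ s.support → z = m :=
    fun z hz hzs ↦ hr z (r.support_bypass_subset_support hz) (hs hzs)
  have hux := hG _ ((r.bypass_isPath.append_of_support_inter (hp.takeUntil hm).reverse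
    (hmeet _ fun z hz ↦ p.support_takeUntil_subset_support hm (by simpa using hz))))
    m (by simp)
  have huy := hG _ ((r.bypass_isPath.append_of_support_inter (hp.dropUntil hm)
    (hmeet _ fun z hz ↦ p.support_dropUntil_subset_support hm hz))) m (by simp)
  refine ⟨m, hm, ?_, ?_⟩ <;>
    linarith [dist_comm x u, dist_comm y u, dist_comm x m, dist_comm y m, dist_comm m u]

lemma dist_le_of_mem_ball_inter {x y u v : V} (hu : dist x u ≤ dist x y)
    (hu' : dist y u ≤ dist x y) (hv : dist x v ≤ dist x y) (hv' : dist y v ≤ dist x y) :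
    dist u v ≤ dist x y := by
  obtain ⟨p, hp⟩ := (hconn x y).exists_isPath
  obtain ⟨m₁, hm₁, hxu, hyu⟩ := hG.exists_median hconn hp u
  obtain ⟨m₂, hm₂, hxv, hyv⟩ := hG.exists_median hconn hp v
  have hxy₁ := hG p hp m₁ hm₁
  have hxy₂ := hG p hp m₂ hm₂
  have htri := dist_triangle4 u m₁ m₂ v
  rw [← p.take_spec hm₁, SimpleGraph.Walk.mem_support_append_iff] at hm₂
  rcases hm₂ with hm₂ | hm₂
  · have hseg := hG _ (hp.takeUntil hm₁) m₂ hm₂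
    linarith [dist_comm u m₁, dist_comm m₁ m₂, dist_comm m₂ v, dist_comm y m₂]
  · have hseg := hG _ (hp.dropUntil hm₁) m₂ hm₂
    linarith [dist_comm u m₁, dist_comm y m₁, dist_comm y m₂, dist_comm m₂ v, dist_comm m₁ m₂]

end Connected

end DistAddOnPaths

end PseudoMetric

lemma DistAddOnPaths.eq_or_eq_of_adj {V : Type*} [MetricSpace V] [DecidableEq V]
    {G : SimpleGraph V} (hG : DistAddOnPaths G) (hconn : G.Connected) {x y v : V}
    (hxy : G.Adj x y) (hv : dist x v ≤ dist x y) (hv' : dist y v ≤ dist x y) : v = x ∨ v = y := by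
  obtain ⟨m, hm, hxv, hyv⟩ := hG.exists_median hconn hxy.isPath_toWalk v
  rw [hxy.support_toWalk] at hm
  rcases List.mem_pair.mp hm with rfl | rfl
  · left
    exact (dist_le_zero.mp (by linarith [dist_comm m y])).symm
  · right
    exact (dist_le_zero.mp (by linarith)).symm

theorem stmt12_general (V : Type*) [MetricSpace V] [Fintype V] [DecidableEq V]
    (G : SimpleGraph V) (l : Sym2 V → ℝ) (hT : G.IsTree)
    (hd : ∀ (x y : V) (p : G.Walk x y), p.IsPath → dist x y = (p.edges.map l).sum)
    (x y : V) (hxy : x ≠ y) (r : ℝ) (hr : dist x y = r) :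
    ∃ Δ : Finset V, Δ ∈ VRComplex V r ∧ {x, y} ⊆ Δ ∧
      (∀ σ ∈ VRComplex V r, {x, y} ⊆ σ → σ ⊆ Δ) ∧
      (↑Δ : Set V) = {v | dist x v ≤ r ∧ dist y v ≤ r} ∧
      (G.Adj x y → Δ = {x, y}) ∧ (¬G.Adj x y → {x, y} ⊂ Δ) := by
  subst hr
  have hG : DistAddOnPaths G := distAddOnPaths_of_dist_eq_sum hd
  have hconn := hT.connected
  set Δ := Finset.univ.filter fun v ↦ dist x v ≤ dist x y ∧ dist y v ≤ dist x y
  have hmem (v : V) : v ∈ Δ ↔ dist x v ≤ dist x y ∧ dist y v ≤ dist x y := by simp [Δ]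
  have hxyΔ : {x, y} ⊆ Δ := by
    simp [Finset.insert_subset_iff, hmem, dist_comm y x]
  refine ⟨Δ, ⟨⟨x, hxyΔ (by simp)⟩, fun u hu v hv ↦ ?_⟩, hxyΔ, ?_, by ext; simp [Δ], ?_, ?_⟩
  · exact hG.dist_le_of_mem_ball_inter hconn ((hmem u).1 hu).1 ((hmem u).1 hu).2
      ((hmem v).1 hv).1 ((hmem v).1 hv).2
  · intro σ hσ hxyσ v hv
    exact (hmem v).2 ⟨hσ.2 x (hxyσ (by simp)) v hv, hσ.2 y (hxyσ (by simp)) v hv⟩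
  · intro hadj
    refine (Finset.Subset.antisymm (fun v hv ↦ ?_) hxyΔ)
    simpa using hG.eq_or_eq_of_adj hconn hadj ((hmem v).1 hv).1 ((hmem v).1 hv).2
  · intro hnadj
    obtain ⟨a, hax, hay, hxa, hya⟩ :=
      hG.exists_ne_mem_ball_inter_of_not_adj (hconn x y) hxy hnadj
    exact (Finset.ssubset_iff_of_subset hxyΔ).2 ⟨a, (hmem a).2 ⟨hxa, hya⟩, by simp [hax, hay]⟩

/-- In a finite tree metric space, every edge `e = {x,y}` with `diam e = r` is
contained in a unique maximal simplex `Δ_e` of `VR_r(V)`, namely the simplex spanned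
by `B(x,r) ∩ B(y,r)`. If `e` is a tree edge of length `r` then `Δ_e = e`; if `e` is
not a tree edge then `e` is a proper face of `Δ_e`. -/
theorem stmt12 (V : Type*) [MetricSpace V] [Fintype V] [DecidableEq V]
    (G : SimpleGraph V) (l : Sym2 V → ℝ) (hT : G.IsTree)
    (hl : ∀ e ∈ G.edgeSet, 0 < l e)
    (hd : ∀ (x y : V) (p : G.Walk x y), p.IsPath → dist x y = (p.edges.map l).sum)
    (x y : V) (hxy : x ≠ y) (r : ℝ) (hr : dist x y = r) :
    ∃ Δ : Finset V, Δ ∈ VRComplex V r ∧ {x, y} ⊆ Δ ∧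
      (∀ σ ∈ VRComplex V r, {x, y} ⊆ σ → σ ⊆ Δ) ∧
      (↑Δ : Set V) = {v | dist x v ≤ r ∧ dist y v ≤ r} ∧
      (G.Adj x y → Δ = {x, y}) ∧ (¬G.Adj x y → {x, y} ⊂ Δ) :=
  stmt12_general V G l hT hd x y hxy r hr
end

section
/- Let (V,d) be a finite tree metric space, Δ a maximal simplex of diameter r_m in VR_{r_m}(V) containing a non-tree edge e={u,w} of length r_m. Then every vertex x ≠ u,w on the unique tree path from u to w belongs to Δ and is not contained in any non-tree edge of length r_m inside Δ. In particular the set L_Δ of vertices of Δ not contained in any such edge is nonempty. -/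
theorem VRComplex.mem_of_maximal {X : Type*} [MetricSpace X] {t : ℝ} {Δ : Finset X}
    (hΔ : Δ ∈ VRComplex X t) (hmax : ∀ σ ∈ VRComplex X t, Δ ⊆ σ → σ = Δ) {x : X}
    (hx : ∀ z ∈ Δ, dist x z ≤ t) : x ∈ Δ := by
  classical
  obtain ⟨y, hy⟩ := hΔ.1
  have ht : 0 ≤ t := dist_self y ▸ hΔ.2 y hy y hy
  have hins : insert x Δ ∈ VRComplex X t := by
    refine ⟨Finset.insert_nonempty x Δ, ?_⟩
    simp only [Finset.mem_insert, forall_eq_or_imp, dist_self]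
    exact ⟨⟨ht, hx⟩, fun a ha => ⟨dist_comm a x ▸ hx a ha, hΔ.2 a ha⟩⟩
  rw [← hmax _ hins (Finset.subset_insert x Δ)]
  exact Finset.mem_insert_self x Δ

namespace SimpleGraph

variable {V : Type*} {G : SimpleGraph V}

theorem Walk.exists_mem_support_ne_ne_of_not_adj {u w : V} (p : G.Walk u w) (huw : u ≠ w)
    (hadj : ¬G.Adj u w) : ∃ x ∈ p.support, x ≠ u ∧ x ≠ w := by
  cases p with
  | nil => exact absurd rfl huw
  | @cons _ x _ h q =>
    refine ⟨x, by simp, h.ne', ?_⟩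
    rintro rfl
    exact hadj h

theorem IsAcyclic.mem_support_or_mem_support (hG : G.IsAcyclic) {a b x z : V} {p : G.Walk a b}
    (hp : p.IsPath) (hx : x ∈ p.support) (q₁ : G.Walk z a) (q₂ : G.Walk z b) :
    x ∈ q₁.support ∨ x ∈ q₂.support := by
  classical
  have hbypass : (q₁.reverse.append q₂).bypass = p :=
    congrArg Subtype.val ((hG.subsingleton_path a b).elim (q₁.reverse.append q₂).toPath ⟨p, hp⟩)
  have hmem : x ∈ (q₁.reverse.append q₂).support :=
    Walk.support_bypass_subset_support _ (hbypass ▸ hx)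
  simpa only [Walk.mem_support_append_iff, Walk.support_reverse, List.mem_reverse] using hmem

end SimpleGraph

section TreeMetric

variable {V : Type*} {G : SimpleGraph V} {l : Sym2 V → ℝ}

theorem dist_add_dist_of_isPath_of_mem_support [PseudoMetricSpace V]
    (hd : ∀ (x y : V) (p : G.Walk x y), p.IsPath → dist x y = (p.edges.map l).sum)
    {a b x : V} {p : G.Walk a b} (hp : p.IsPath) (hx : x ∈ p.support) :
    dist a x + dist x b = dist a b := by
  classical
  rw [hd _ _ _ (hp.takeUntil hx), hd _ _ _ (hp.dropUntil hx), hd _ _ _ hp,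
    ← List.sum_append, ← List.map_append, ← SimpleGraph.Walk.edges_append, p.take_spec hx]

theorem dist_lt_max_of_isTree_of_mem_support [MetricSpace V] (hT : G.IsTree)
    (hd : ∀ (x y : V) (p : G.Walk x y), p.IsPath → dist x y = (p.edges.map l).sum)
    {u w x : V} {p : G.Walk u w} (hp : p.IsPath) (hx : x ∈ p.support) (hxu : x ≠ u)
    (hxw : x ≠ w) (z : V) : dist x z < max (dist z u) (dist z w) := by
  classical
  obtain ⟨q₁⟩ := hT.1.preconnected z u
  obtain ⟨q₂⟩ := hT.1.preconnected z w
  rw [dist_comm x z]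
  rcases hT.2.mem_support_or_mem_support hp hx q₁.bypass q₂.bypass with h | h
  · have hsplit := dist_add_dist_of_isPath_of_mem_support hd q₁.bypass_isPath h
    have hpos : 0 < dist x u := dist_pos.mpr hxu
    exact lt_max_of_lt_left (by linarith)
  · have hsplit := dist_add_dist_of_isPath_of_mem_support hd q₂.bypass_isPath h
    have hpos : 0 < dist x w := dist_pos.mpr hxw
    exact lt_max_of_lt_right (by linarith)

end TreeMetric

theorem stmt14_general (V : Type*) [MetricSpace V]
    (G : SimpleGraph V) (l : Sym2 V → ℝ) (hT : G.IsTree)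
    (hd : ∀ (x y : V) (p : G.Walk x y), p.IsPath → dist x y = (p.edges.map l).sum)
    (r : ℝ) (Δ : Finset V) (hΔ : Δ ∈ VRComplex V r)
    (hmax : ∀ σ ∈ VRComplex V r, Δ ⊆ σ → σ = Δ)
    (u w : V) (huw : u ≠ w) (huΔ : u ∈ Δ) (hwΔ : w ∈ Δ)
    (he : ¬G.Adj u w) :
    (∀ x : V, x ≠ u → x ≠ w →
        (∃ p : G.Walk u w, p.IsPath ∧ x ∈ p.support) →
        x ∈ Δ ∧ ∀ z ∈ Δ, z ≠ x → ¬(dist x z = r ∧ ¬G.Adj x z)) ∧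
      ∃ x ∈ Δ, ∀ z ∈ Δ, z ≠ x → ¬(dist x z = r ∧ ¬G.Adj x z) := by
  have interior : ∀ x : V, x ≠ u → x ≠ w →
      (∃ p : G.Walk u w, p.IsPath ∧ x ∈ p.support) →
      x ∈ Δ ∧ ∀ z ∈ Δ, z ≠ x → ¬(dist x z = r ∧ ¬G.Adj x z) := by
    rintro x hxu hxw ⟨p, hp, hx⟩
    have hlt : ∀ z ∈ Δ, dist x z < r := fun z hz =>
      (dist_lt_max_of_isTree_of_mem_support hT hd hp hx hxu hxw z).trans_le
        (max_le (hΔ.2 z hz u huΔ) (hΔ.2 z hz w hwΔ))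
    exact ⟨VRComplex.mem_of_maximal hΔ hmax fun z hz => (hlt z hz).le,
      fun z hz _ h => (hlt z hz).ne h.1⟩
  refine ⟨interior, ?_⟩
  classical
  obtain ⟨q⟩ := hT.1.preconnected u w
  obtain ⟨x, hx, hxu, hxw⟩ := q.bypass.exists_mem_support_ne_ne_of_not_adj huw he
  exact ⟨x, interior x hxu hxw ⟨_, q.bypass_isPath, hx⟩⟩

/-- In a finite tree metric space, let `Δ` be a maximal simplex of `VR_r(V)`
containing a non-tree edge `e = {u,w}` of length `r`. Then every vertex `x ≠ u, w`
on the unique tree path from `u` to `w` belongs to `Δ` and is not contained in any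
non-tree edge of length `r` inside `Δ`; in particular the set `L_Δ` of such
vertices of `Δ` is nonempty. -/
theorem stmt14 (V : Type*) [MetricSpace V] [Fintype V]
    (G : SimpleGraph V) (l : Sym2 V → ℝ) (hT : G.IsTree)
    (hl : ∀ e ∈ G.edgeSet, 0 < l e)
    (hd : ∀ (x y : V) (p : G.Walk x y), p.IsPath → dist x y = (p.edges.map l).sum)
    (r : ℝ) (Δ : Finset V) (hΔ : Δ ∈ VRComplex V r)
    (hmax : ∀ σ ∈ VRComplex V r, Δ ⊆ σ → σ = Δ)
    (u w : V) (huw : u ≠ w) (huΔ : u ∈ Δ) (hwΔ : w ∈ Δ)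
    (hduw : dist u w = r) (he : ¬G.Adj u w) :
    (∀ x : V, x ≠ u → x ≠ w →
        (∃ p : G.Walk u w, p.IsPath ∧ x ∈ p.support) →
        x ∈ Δ ∧ ∀ z ∈ Δ, z ≠ x → ¬(dist x z = r ∧ ¬G.Adj x z)) ∧
      ∃ x ∈ Δ, ∀ z ∈ Δ, z ≠ x → ¬(dist x z = r ∧ ¬G.Adj x z) :=
  stmt14_general V G l hT hd r Δ hΔ hmax u w huw huΔ hwΔ he
end

section
/- Let K be a finite simplicial complex and L ⊆ K a subcomplex. If V is a discrete gradient on K (a partition of a subset of K into regular face-poset intervals arising from a discrete Morse function) such that K \ L is exactly the union of the intervals in V, then K collapses simplicially onto L; in particular K and L are homotopy equivalent. -/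
/-- An abstract simplicial complex on the vertex type `X`: a collection of nonempty
finite subsets closed under taking nonempty subsets. -/
def IsComplex {X : Type*} (K : Set (Finset X)) : Prop :=
  ∀ σ ∈ K, σ.Nonempty ∧ ∀ ρ : Finset X, ρ.Nonempty → ρ ⊆ σ → ρ ∈ K

/-- `P` is the interval partition of a discrete Morse function `f` on `K`:
every simplex lies in a unique face-poset interval `[p.1, p.2]` with `p ∈ P`,
`f` is monotonic, and `f σ = f τ` for `σ ⊆ τ` iff `σ, τ` lie in a common
interval. The regular intervals (`p.1 ≠ p.2`) form the discrete gradient of `f`. -/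
def IsMorsePartition {X : Type*} (K : Set (Finset X)) (f : Finset X → ℝ)
    (P : Set (Finset X × Finset X)) : Prop :=
  (∀ p ∈ P, p.1 ∈ K ∧ p.2 ∈ K ∧ p.1 ⊆ p.2) ∧
  (∀ σ ∈ K, ∃! p, p ∈ P ∧ p.1 ⊆ σ ∧ σ ⊆ p.2) ∧
  (∀ σ ∈ K, ∀ τ ∈ K, σ ⊆ τ → f σ ≤ f τ) ∧
  (∀ σ ∈ K, ∀ τ ∈ K, σ ⊆ τ → (f σ = f τ ↔ ∃ p ∈ P, p.1 ⊆ σ ∧ τ ⊆ p.2))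

/-- An elementary collapse removes a free pair `(σ, τ)`: `σ` is a facet of `τ` and
`τ` is the unique proper coface of `σ`. -/
def ElemCollapse {X : Type*} (K L : Set (Finset X)) : Prop :=
  ∃ σ τ : Finset X, σ ∈ K ∧ τ ∈ K ∧ σ ⊂ τ ∧ σ.card + 1 = τ.card ∧
    (∀ ρ ∈ K, σ ⊂ ρ → ρ = τ) ∧ L = K \ {σ, τ}

/-- A collapse is a finite sequence of elementary collapses. -/
def Collapses {X : Type*} (K L : Set (Finset X)) : Prop :=
  Relation.ReflTransGen ElemCollapse K L

/-!
Induct on the number of simplices of `K \ L`. Pick a regular interval `[ρ, φ]` on which `f` takes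
its largest value among regular intervals. A coface `ψ ∈ K` of a simplex `σ ∈ [ρ, φ]` is not in `L`
(as `L` is closed under faces), so it lies in a regular interval, whose value is at most that of
`[ρ, φ]`; monotonicity gives `f σ = f ψ`, hence `σ` and `ψ` share an interval, which must be
`[ρ, φ]`. So `[ρ, φ]` is an up-set of `K`. For `v ∈ φ \ ρ` it is the disjoint union of the pairs
`(σ, σ ∪ {v})`, `v ∉ σ`, and removing these pairs in order of decreasing dimension is a sequence of
elementary collapses. What remains is a complex, still containing `L`, with the Morse partition
`P \ {[ρ, φ]}`.
-/

section Collapse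

variable {X : Type*}

theorem Finset.erase_eq_iff_eq_or_eq_insert [DecidableEq X] {v : X} {σ τ : Finset X}
    (hv : v ∉ σ) : τ.erase v = σ ↔ τ = σ ∨ τ = insert v σ := by
  by_cases hvτ : v ∈ τ
  · rw [Finset.erase_eq_iff_eq_insert hvτ hv]
    exact ⟨Or.inr, fun h => h.resolve_left (by rintro rfl; exact hv hvτ)⟩
  · rw [Finset.erase_eq_of_notMem hvτ]
    exact ⟨Or.inl, fun h => h.resolve_right (by rintro rfl; exact hvτ (Finset.mem_insert_self v σ))⟩

theorem collapses_sdiff_of_insert_mem_of_erase_mem [DecidableEq X] (v : X)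
    (M : Finset (Finset X)) (K : Set (Finset X)) (hMK : ↑M ⊆ K)
    (hup : ∀ σ ∈ M, ∀ ψ ∈ K, σ ⊆ ψ → ψ ∈ M)
    (hins : ∀ σ ∈ M, insert v σ ∈ M) (hera : ∀ σ ∈ M, σ.erase v ∈ M) :
    Collapses K (K \ M) := by
  unfold Collapses
  induction M using Finset.strongInduction generalizing K with
  | H M ih =>
  rcases M.eq_empty_or_nonempty with rfl | ⟨τ, hτ⟩
  · simpa using Relation.ReflTransGen.refl
  obtain ⟨σ, hσ, hσmax⟩ := (M.filter (v ∉ ·)).exists_max_image Finset.card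
    ⟨τ.erase v, Finset.mem_filter.2 ⟨hera τ hτ, Finset.notMem_erase v τ⟩⟩
  obtain ⟨hσM, hvσ⟩ := Finset.mem_filter.1 hσ
  have hpair : ∀ ψ, ψ.erase v = σ ↔ ψ ∈ ({σ, insert v σ} : Set (Finset X)) := fun ψ =>
    Finset.erase_eq_iff_eq_or_eq_insert hvσ
  have hfree : ∀ ψ ∈ K, σ ⊂ ψ → ψ = insert v σ := by
    intro ψ hψ hσψ
    have hψM := hup σ hσM ψ hψ hσψ.subset
    have hσψ' : σ ⊆ ψ.erase v := Finset.subset_erase.2 ⟨hσψ.subset, hvσ⟩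
    have hψσ : ψ.erase v = σ := (Finset.eq_of_subset_of_card_le hσψ' (hσmax _
      (Finset.mem_filter.2 ⟨hera ψ hψM, Finset.notMem_erase v ψ⟩))).symm
    exact ((Finset.erase_eq_iff_eq_or_eq_insert hvσ).1 hψσ).resolve_left hσψ.ne'
  have hstep : ElemCollapse K (K \ {σ, insert v σ}) :=
    ⟨σ, insert v σ, hMK hσM, hMK (hins σ hσM), Finset.ssubset_insert hvσ,
      (Finset.card_insert_of_notMem hvσ).symm, hfree, rfl⟩
  set M' := M.filter (·.erase v ≠ σ)
  have hM' : M' ⊂ M := Finset.filter_ssubset.2 ⟨σ, hσM, by simp [Finset.erase_eq_of_notMem hvσ]⟩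
  have hrest := ih M' hM' (K \ {σ, insert v σ}) ?sub ?up ?ins ?era
  case sub =>
    intro τ hτ
    obtain ⟨hτM, hτσ⟩ := Finset.mem_filter.1 hτ
    exact ⟨hMK hτM, fun h => hτσ ((hpair τ).2 h)⟩
  case up =>
    intro τ hτ ψ ⟨hψK, hψσ⟩ hτψ
    exact Finset.mem_filter.2
      ⟨hup τ (Finset.mem_filter.1 hτ).1 ψ hψK hτψ, fun h => hψσ ((hpair ψ).1 h)⟩
  case ins =>
    intro τ hτ
    obtain ⟨hτM, hτσ⟩ := Finset.mem_filter.1 hτ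
    exact Finset.mem_filter.2 ⟨hins τ hτM, by rwa [Finset.erase_insert_eq_erase]⟩
  case era =>
    intro τ hτ
    obtain ⟨hτM, hτσ⟩ := Finset.mem_filter.1 hτ
    exact Finset.mem_filter.2 ⟨hera τ hτM, by rwa [Finset.erase_idem]⟩
  convert Relation.ReflTransGen.head hstep hrest using 1
  ext ψ
  have hψM : ψ.erase v = σ → ψ ∈ M := fun h => by
    rcases (Finset.erase_eq_iff_eq_or_eq_insert hvσ).1 h with rfl | rfl
    exacts [hσM, hins σ hσM]
  have := @hMK ψ
  simp only [M', Set.mem_sdiff, ← hpair, Finset.coe_filter, Set.mem_ofPred_eq, Finset.mem_coe]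
  tauto

theorem collapses_sdiff_Icc {K : Set (Finset X)} {ρ φ : Finset X} (hρφ : ρ ⊂ φ)
    (hK : Set.Icc ρ φ ⊆ K) (hup : ∀ σ ∈ Set.Icc ρ φ, ∀ ψ ∈ K, σ ⊆ ψ → ψ ∈ Set.Icc ρ φ) :
    Collapses K (K \ Set.Icc ρ φ) := by
  classical
  obtain ⟨v, hvφ, hvρ⟩ := Finset.exists_of_ssubset hρφ
  rw [← Finset.coe_Icc] at hK hup ⊢
  refine collapses_sdiff_of_insert_mem_of_erase_mem v _ K hK hup (fun σ hσ => ?_) (fun σ hσ => ?_)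
  all_goals
    obtain ⟨hρσ, hσφ⟩ := Finset.mem_Icc.1 hσ
    refine Finset.mem_Icc.2 ⟨?_, ?_⟩
  · exact hρσ.trans (Finset.subset_insert v σ)
  · exact Finset.insert_subset hvφ hσφ
  · exact Finset.subset_erase.2 ⟨hρσ, hvρ⟩
  · exact (Finset.erase_subset v σ).trans hσφ

end Collapse

theorem IsComplex.sdiff {X : Type*} {K M : Set (Finset X)} (hK : IsComplex K)
    (hup : ∀ σ ∈ M, ∀ ψ ∈ K, σ ⊆ ψ → ψ ∈ M) : IsComplex (K \ M) := fun σ ⟨hσK, hσM⟩ =>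
  ⟨(hK σ hσK).1, fun ρ hρ hρσ => ⟨(hK σ hσK).2 ρ hρ hρσ, fun hρM => hσM (hup ρ hρM σ hσK hρσ)⟩⟩

theorem Set.exists_mem_sdiff_singleton_iff {α : Type*} {P : Set α} {p : α} {Q : α → Prop}
    (hp : ¬Q p) : (∃ q ∈ P \ {p}, Q q) ↔ ∃ q ∈ P, Q q :=
  ⟨fun ⟨q, hq, hQ⟩ => ⟨q, hq.1, hQ⟩,
    fun ⟨q, hq, hQ⟩ => ⟨q, ⟨hq, fun (h : q = p) => hp (h ▸ hQ)⟩, hQ⟩⟩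

namespace IsMorsePartition

variable {X : Type*} {K : Set (Finset X)} {f : Finset X → ℝ} {P : Set (Finset X × Finset X)}
  {p q : Finset X × Finset X} {σ : Finset X}

theorem eq_of_mem_Icc (hP : IsMorsePartition K f P) (hσ : σ ∈ K) (hp : p ∈ P) (hq : q ∈ P)
    (hσp : σ ∈ Set.Icc p.1 p.2) (hσq : σ ∈ Set.Icc q.1 q.2) : p = q :=
  (hP.2.1 σ hσ).unique ⟨hp, hσp⟩ ⟨hq, hσq⟩

theorem apply_eq_apply_snd (hP : IsMorsePartition K f P) (hσ : σ ∈ K) (hp : p ∈ P)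
    (hσp : σ ∈ Set.Icc p.1 p.2) : f σ = f p.2 :=
  (hP.2.2.2 σ hσ p.2 (hP.1 p hp).2.1 hσp.2).2 ⟨p, hp, hσp.1, le_rfl⟩

theorem Icc_subset (hK : IsComplex K) (hP : IsMorsePartition K f P) (hp : p ∈ P) :
    Set.Icc p.1 p.2 ⊆ K := fun σ hσ =>
  (hK p.2 (hP.1 p hp).2.1).2 σ ((hK p.1 (hP.1 p hp).1).1.mono hσ.1) hσ.2

theorem sdiff_Icc (hP : IsMorsePartition K f P) (hp : p ∈ P) :
    IsMorsePartition (K \ Set.Icc p.1 p.2) f (P \ {p}) := by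
  refine ⟨fun q ⟨hq, hqp⟩ => ?_, fun σ ⟨hσK, hσp⟩ => ?_,
    fun σ hσ τ hτ => hP.2.2.1 σ hσ.1 τ hτ.1, fun σ ⟨hσK, hσp⟩ τ hτ hστ => ?_⟩
  · obtain ⟨hq1, hq2, hq12⟩ := hP.1 q hq
    have hqI : ∀ σ ∈ K, σ ∈ Set.Icc q.1 q.2 → σ ∉ Set.Icc p.1 p.2 := fun σ hσ hσq hσp =>
      hqp (hP.eq_of_mem_Icc hσ hq hp hσq hσp)
    exact ⟨⟨hq1, hqI _ hq1 ⟨le_rfl, hq12⟩⟩, ⟨hq2, hqI _ hq2 ⟨hq12, le_rfl⟩⟩, hq12⟩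
  · obtain ⟨r, ⟨hr, hσr⟩, hrunique⟩ := hP.2.1 σ hσK
    exact ⟨r, ⟨⟨hr, fun (hrp : r = p) => hσp (hrp ▸ hσr)⟩, hσr⟩,
      fun r' ⟨⟨hr', _⟩, hσr'⟩ => hrunique r' ⟨hr', hσr'⟩⟩
  · rw [hP.2.2.2 σ hσK τ hτ.1 hστ, Set.exists_mem_sdiff_singleton_iff]
    exact fun h => hσp ⟨h.1, hστ.trans h.2⟩

theorem mem_Icc_of_subset_of_forall_le {L : Set (Finset X)} {ψ : Finset X} (hK : IsComplex K)
    (hL : IsComplex L) (hP : IsMorsePartition K f P)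
    (hcompl : ∀ σ ∈ K, (σ ∉ L ↔ ∃ p ∈ P, p.1 ≠ p.2 ∧ p.1 ⊆ σ ∧ σ ⊆ p.2))
    (hp : p ∈ P) (hreg : p.1 ≠ p.2) (hmax : ∀ q ∈ P, q.1 ≠ q.2 → f q.2 ≤ f p.2)
    (hσ : σ ∈ Set.Icc p.1 p.2) (hψ : ψ ∈ K) (hσψ : σ ⊆ ψ) : ψ ∈ Set.Icc p.1 p.2 := by
  have hσK := hP.Icc_subset hK hp hσ
  have hσL : σ ∉ L := (hcompl σ hσK).2 ⟨p, hp, hreg, hσ⟩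
  have hψL : ψ ∉ L := fun hψL => hσL ((hL ψ hψL).2 σ (hK σ hσK).1 hσψ)
  obtain ⟨q, hq, hqreg, hψq⟩ := (hcompl ψ hψ).1 hψL
  have hfσψ : f σ = f ψ := le_antisymm (hP.2.2.1 σ hσK ψ hψ hσψ) <| calc
    f ψ = f q.2 := hP.apply_eq_apply_snd hψ hq hψq
    _ ≤ f p.2 := hmax q hq hqreg
    _ = f σ := (hP.apply_eq_apply_snd hσK hp hσ).symm
  obtain ⟨r, hr, hr1, hr2⟩ := (hP.2.2.2 σ hσK ψ hψ hσψ).1 hfσψ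
  have hrp : r = p := hP.eq_of_mem_Icc hσK hr hp ⟨hr1, hσψ.trans hr2⟩ hσ
  exact ⟨hσ.1.trans hσψ, hrp ▸ hr2⟩

end IsMorsePartition

/-- Discrete Morse collapsing theorem: if `K` is a finite simplicial complex,
`L ⊆ K` a subcomplex, and the complement `K \ L` is exactly the union of the
regular intervals of a discrete gradient on `K`, then `K` collapses onto `L`. -/
theorem stmt16 (X : Type*) [Fintype X] (K L : Set (Finset X))
    (hK : IsComplex K) (hLK : L ⊆ K) (hL : IsComplex L)
    (f : Finset X → ℝ) (P : Set (Finset X × Finset X))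
    (hP : IsMorsePartition K f P)
    (hcompl : ∀ σ ∈ K, (σ ∉ L ↔ ∃ p ∈ P, p.1 ≠ p.2 ∧ p.1 ⊆ σ ∧ σ ⊆ p.2)) :
    Collapses K L := by
  obtain ⟨n, hn⟩ : ∃ n, (K \ L).ncard = n := ⟨_, rfl⟩
  induction n using Nat.strong_induction_on generalizing K P with
  | _ n ih =>
  by_cases hKL : K ⊆ L
  · rw [hKL.antisymm hLK]
    exact Relation.ReflTransGen.refl
  obtain ⟨σ₀, hσ₀K, hσ₀L⟩ := Set.not_subset.1 hKL
  obtain ⟨p, ⟨hp, hreg⟩, hmax⟩ := Set.exists_max_image {q ∈ P | q.1 ≠ q.2} (fun q => f q.2)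
    (Set.toFinite _) (let ⟨q, hq, hqreg, _⟩ := (hcompl σ₀ hσ₀K).1 hσ₀L; ⟨q, hq, hqreg⟩)
  set I := Set.Icc p.1 p.2
  have hup : ∀ σ ∈ I, ∀ ψ ∈ K, σ ⊆ ψ → ψ ∈ I := fun σ hσ ψ hψ hσψ =>
    hP.mem_Icc_of_subset_of_forall_le hK hL hcompl hp hreg (fun q hq hqreg => hmax q ⟨hq, hqreg⟩)
      hσ hψ hσψ
  have hIL : ∀ σ ∈ K, σ ∈ I → σ ∉ L := fun σ hσ hσI => (hcompl σ hσ).2 ⟨p, hp, hreg, hσI⟩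
  have hp1I : p.1 ∈ I := ⟨le_rfl, (hP.1 p hp).2.2⟩
  have hlt : ((K \ I) \ L).ncard < n := by
    rw [sdiff_right_comm, ← hn]
    exact Set.ncard_lt_ncard (Set.sdiff_ssubset_left_iff.2
      ⟨p.1, ⟨(hP.1 p hp).1, hIL _ (hP.1 p hp).1 hp1I⟩, hp1I⟩)
  refine Relation.ReflTransGen.trans
    (collapses_sdiff_Icc (LE.le.ssubset_of_ne (hP.1 p hp).2.2 hreg) (hP.Icc_subset hK hp) hup)
    (ih _ hlt _ (hK.sdiff hup) ?_ _ (hP.sdiff_Icc hp) ?_ rfl)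
  · exact fun σ hσL => ⟨hLK hσL, fun hσI => hIL σ (hLK hσL) hσI hσL⟩
  · exact fun σ ⟨hσK, hσI⟩ => (hcompl σ hσK).trans
      (Set.exists_mem_sdiff_singleton_iff fun h => hσI h.2).symm
end

section
/- Let f: K → ℝ be a discrete Morse function on a finite simplicial complex with totally ordered vertices, with discrete gradient V. Define the refinement Ṽ = {(ψ∖{v}, ψ∪{v}) : ψ ∈ [ρ,φ] ∈ V, v = min(φ∖ρ)}. Then the zero persistence apparent pairs of the f-lexicographic order on K are precisely the pairs of Ṽ. -/
/-- The lexicographic order on simplices induced by a total vertex order. -/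
def LexLT {X : Type*} [LinearOrder X] (σ τ : Finset X) : Prop :=
  List.Lex (· < ·) (σ.sort (· ≤ ·)) (τ.sort (· ≤ ·))

/-- The `f`-lexicographic order: first by `f`-value, then by dimension, then
lexicographically. -/
def FlexLT {X : Type*} [LinearOrder X] (f : Finset X → ℝ) (σ τ : Finset X) : Prop :=
  f σ < f τ ∨ (f σ = f τ ∧ (σ.card < τ.card ∨ (σ.card = τ.card ∧ LexLT σ τ)))

/-- `(σ, τ)` is an apparent pair with respect to the `f`-lexicographic order:
`σ` is the maximal facet of `τ` and `τ` is the minimal cofacet of `σ`. -/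
def ApparentPair {X : Type*} [LinearOrder X] (K : Set (Finset X))
    (f : Finset X → ℝ) (σ τ : Finset X) : Prop :=
  σ ∈ K ∧ τ ∈ K ∧ σ ⊆ τ ∧ σ.card + 1 = τ.card ∧
    (∀ σ' ∈ K, σ' ⊆ τ → σ'.card + 1 = τ.card → σ' ≠ σ → FlexLT f σ' σ) ∧
    (∀ τ' ∈ K, σ ⊆ τ' → σ.card + 1 = τ'.card → τ' ≠ τ → FlexLT f τ τ')

/-- `(σ, τ)` is a pair of the minimal vertex refinement `Ṽ` of the gradient:
`σ = ψ \ {v}` and `τ = ψ ∪ {v}` for some `ψ` in a regular interval `[ρ, φ] ∈ V`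
with `v = min (φ \ ρ)`. -/
def TildePair {X : Type*} [LinearOrder X] (P : Set (Finset X × Finset X))
    (σ τ : Finset X) : Prop :=
  ∃ p ∈ P, p.1 ≠ p.2 ∧ ∃ ψ v, p.1 ⊆ ψ ∧ ψ ⊆ p.2 ∧
    v ∈ p.2 \ p.1 ∧ (∀ u ∈ p.2 \ p.1, v ≤ u) ∧ σ = ψ \ {v} ∧ τ = ψ ∪ {v}

/-! Every face of a regular interval `[ρ, φ]` has the same `f`-value, and `f` increases strictly
across different intervals. Hence a zero-persistence pair `(σ, insert w σ)` lies in one interval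
`[ρ, φ]`, and so does every facet or cofacet competing with it at the same `f`-value; such a
competitor differs from `σ` or `insert w σ` in a single vertex `u ∈ φ \ ρ`. Between two simplices
differing in one vertex the lexicographic order prefers the smaller vertex, so the pair is apparent
exactly when `w = min (φ \ ρ)`. -/

namespace List

variable {X : Type*} [LinearOrder X]

theorem lex_lt_of_mem_of_forall_lt {l₁ l₂ : List X} (h₁ : l₁.Pairwise (· < ·))
    (h₂ : l₂.Pairwise (· < ·)) (hlen : l₁.length = l₂.length) {a : X} (ha₁ : a ∈ l₁)
    (ha₂ : a ∉ l₂) (hmin : ∀ b ∈ l₂, b ∉ l₁ → a < b) : Lex (· < ·) l₁ l₂ := by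
  induction l₁ generalizing l₂ with
  | nil => simp at ha₁
  | cons x xs ih =>
    obtain _ | ⟨y, ys⟩ := l₂
    · simp at hlen
    rw [pairwise_cons] at h₁ h₂
    by_cases hxy : x = y
    · subst hxy
      refine .cons (ih h₁.2 h₂.2 (by simpa using hlen) ?_ (by simp_all) fun b hb hbxs => ?_)
      · exact (mem_cons.1 ha₁).resolve_left (by rintro rfl; simp at ha₂)
      · exact hmin b (mem_cons_of_mem _ hb) (by grind)
    · refine .rel ?_
      by_cases hyxs : y ∈ xs
      · exact h₁.1 y hyxs
      · have hxa : x ≤ a := by grind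
        exact hxa.trans_lt (hmin y mem_cons_self (by grind))

end List

section

variable {X : Type*} [LinearOrder X]

theorem lexLT_asymm {σ τ : Finset X} (h : LexLT σ τ) : ¬LexLT τ σ :=
  _root_.asymm (r := List.Lex ((· < ·) : X → X → Prop)) h

theorem lexLT_insert_insert {C : Finset X} {v w : X} (hv : v ∉ C) (hw : w ∉ C) (hvw : v < w) :
    LexLT (insert v C) (insert w C) := by
  refine List.lex_lt_of_mem_of_forall_lt (Finset.sortedLT_sort _).pairwise
    (Finset.sortedLT_sort _).pairwise (by simp [Finset.card_insert_of_notMem, hv, hw])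
    (a := v) (by simp) (by simp [hvw.ne, hv]) ?_
  simp only [Finset.mem_sort, Finset.mem_insert]
  grind

theorem flexLT_iff_lexLT {f : Finset X → ℝ} {σ τ : Finset X} (hf : f σ = f τ)
    (hcard : σ.card = τ.card) : FlexLT f σ τ ↔ LexLT σ τ := by
  simp [FlexLT, hf, hcard]

end

section

variable {X : Type*} {K : Set (Finset X)} {f : Finset X → ℝ} {P : Set (Finset X × Finset X)}

theorem IsComplex.mem_of_subset_of_subset (hK : IsComplex K) {ρ σ φ : Finset X} (hρ : ρ ∈ K)
    (hφ : φ ∈ K) (hρσ : ρ ⊆ σ) (hσφ : σ ⊆ φ) : σ ∈ K :=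
  (hK φ hφ).2 σ ((hK ρ hρ).1.mono hρσ) hσφ

namespace IsMorsePartition

variable {p : Finset X × Finset X} {σ τ : Finset X}

theorem mem_of_mem_interval (hK : IsComplex K) (hP : IsMorsePartition K f P) (hp : p ∈ P)
    (h₁ : p.1 ⊆ σ) (h₂ : σ ⊆ p.2) : σ ∈ K :=
  hK.mem_of_subset_of_subset (hP.1 p hp).1 (hP.1 p hp).2.1 h₁ h₂

theorem apply_eq_of_mem_interval (hK : IsComplex K) (hP : IsMorsePartition K f P) (hp : p ∈ P)
    (h₁ : p.1 ⊆ σ) (h₂ : σ ⊆ p.2) : f σ = f p.2 :=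
  (hP.2.2.2 σ (hP.mem_of_mem_interval hK hp h₁ h₂) p.2 (hP.1 p hp).2.1 h₂).2
    ⟨p, hp, h₁, subset_rfl⟩

theorem subset_interval_of_apply_eq (hP : IsMorsePartition K f P) (hp : p ∈ P) {χ : Finset X}
    (hσ : σ ∈ K) (hτ : τ ∈ K) (hχ : χ ∈ K) (hσχ : σ ⊆ χ) (hχτ : χ ⊆ τ) (hpχ : p.1 ⊆ χ)
    (hχp : χ ⊆ p.2) (hf : f σ = f τ) : p.1 ⊆ σ ∧ τ ⊆ p.2 := by
  obtain ⟨q, hq, hqσ, hτq⟩ := (hP.2.2.2 σ hσ τ hτ (hσχ.trans hχτ)).1 hf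
  obtain rfl : q = p :=
    (hP.2.1 χ hχ).unique ⟨hq, hqσ.trans hσχ, hχτ.trans hτq⟩ ⟨hp, hpχ, hχp⟩
  exact ⟨hqσ, hτq⟩

end IsMorsePartition

end

section

variable {X : Type*} [LinearOrder X] {K : Set (Finset X)} {f : Finset X → ℝ}
  {P : Set (Finset X × Finset X)} {p : Finset X × Finset X} {σ : Finset X} {w : X}

theorem forall_le_of_apparentPair_insert (hK : IsComplex K) (hP : IsMorsePartition K f P)
    (hp : p ∈ P) (hw : w ∉ σ) (hpσ : p.1 ⊆ σ) (hwp : insert w σ ⊆ p.2)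
    (happ : ApparentPair K f σ (insert w σ)) : ∀ u ∈ p.2 \ p.1, w ≤ u := by
  obtain ⟨-, -, -, -, hmax, hmin⟩ := happ
  have hσp : σ ⊆ p.2 := (Finset.subset_insert w σ).trans hwp
  intro u hu
  obtain ⟨huφ, huρ⟩ := Finset.mem_sdiff.1 hu
  by_contra! huw
  by_cases huσ : u ∈ σ
  · -- the facet `insert w (σ.erase u)` of `insert w σ` would beat `σ`
    set C := σ.erase u
    have hσC : σ = insert u C := (Finset.insert_erase huσ).symm
    have hC : u ∉ C ∧ w ∉ C := by grind
    have hpC : p.1 ⊆ insert w C := fun x hx => by grind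
    have hCp : insert w C ⊆ p.2 := fun x hx => by grind
    have hlex := lexLT_insert_insert hC.1 hC.2 huw
    rw [← hσC] at hlex
    refine lexLT_asymm hlex ((flexLT_iff_lexLT ?_ ?_).1 (hmax _
      (hP.mem_of_mem_interval hK hp hpC hCp) (by grind) ?_ (by grind)))
    · rw [hP.apply_eq_of_mem_interval hK hp hpC hCp, hP.apply_eq_of_mem_interval hK hp hpσ hσp]
    · rw [hσC, Finset.card_insert_of_notMem hC.1, Finset.card_insert_of_notMem hC.2]
    · rw [Finset.card_insert_of_notMem hC.2, Finset.card_insert_of_notMem hw, hσC,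
        Finset.card_insert_of_notMem hC.1]
  · -- the cofacet `insert u σ` of `σ` would beat `insert w σ`
    have hup : insert u σ ⊆ p.2 := Finset.insert_subset huφ hσp
    have hpu : p.1 ⊆ insert u σ := hpσ.trans (Finset.subset_insert u σ)
    refine lexLT_asymm (lexLT_insert_insert huσ hw huw) ((flexLT_iff_lexLT ?_ ?_).1 (hmin _
      (hP.mem_of_mem_interval hK hp hpu hup) (Finset.subset_insert u σ) ?_ (by grind)))
    · rw [hP.apply_eq_of_mem_interval hK hp (hpσ.trans (Finset.subset_insert w σ)) hwp,
        hP.apply_eq_of_mem_interval hK hp hpu hup]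
    · rw [Finset.card_insert_of_notMem hw, Finset.card_insert_of_notMem huσ]
    · rw [Finset.card_insert_of_notMem huσ]

theorem apparentPair_insert_of_forall_le (hK : IsComplex K) (hP : IsMorsePartition K f P)
    (hp : p ∈ P) (hw : w ∉ σ) (hpσ : p.1 ⊆ σ) (hwp : insert w σ ⊆ p.2)
    (hwmin : ∀ u ∈ p.2 \ p.1, w ≤ u) : ApparentPair K f σ (insert w σ) := by
  have hσp : σ ⊆ p.2 := (Finset.subset_insert w σ).trans hwp
  have hpτ : p.1 ⊆ insert w σ := hpσ.trans (Finset.subset_insert w σ)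
  have hσK := hP.mem_of_mem_interval hK hp hpσ hσp
  have hτK := hP.mem_of_mem_interval hK hp hpτ hwp
  have hfσ := hP.apply_eq_of_mem_interval hK hp hpσ hσp
  have hfτ := hP.apply_eq_of_mem_interval hK hp hpτ hwp
  have hlt : ∀ u ∈ p.2, u ∉ p.1 → u ≠ w → w < u := fun u hu hu' hne =>
    (hwmin u (Finset.mem_sdiff.2 ⟨hu, hu'⟩)).lt_of_ne' hne
  refine ⟨hσK, hτK, Finset.subset_insert w σ, (Finset.card_insert_of_notMem hw).symm, ?_, ?_⟩
  · intro σ' hσ'K hσ'τ hcard hne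
    obtain ⟨u, huσ', hσ'u⟩ := Finset.exists_eq_insert_iff.2 ⟨hσ'τ, hcard⟩
    have huw : u ≠ w := by rintro rfl; exact hne (by grind)
    have huσ : u ∈ σ := by grind
    set C := σ.erase u
    have hσC : σ = insert u C := (Finset.insert_erase huσ).symm
    have hσ'C : σ' = insert w C := by grind
    have hC : u ∉ C ∧ w ∉ C := by grind
    rcases (hP.2.2.1 σ' hσ'K _ hτK hσ'τ).lt_or_eq with hf | hf
    · exact .inl (by rwa [hfσ, ← hfτ])
    obtain ⟨hpσ', -⟩ :=
      hP.subset_interval_of_apply_eq hp hσ'K hτK hτK hσ'τ subset_rfl hpτ hwp hf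
    rw [hσ'C, hσC]
    refine (flexLT_iff_lexLT ?_ ?_).2 (lexLT_insert_insert hC.2 hC.1 ?_)
    · rw [← hσC, ← hσ'C, hf, hfτ, hfσ]
    · rw [Finset.card_insert_of_notMem hC.1, Finset.card_insert_of_notMem hC.2]
    · exact hlt u (hσp huσ) (fun h => huσ' (hpσ' h)) huw
  · intro τ' hτ'K hστ' hcard hne
    obtain ⟨u, huσ, rfl⟩ := Finset.exists_eq_insert_iff.2 ⟨hστ', hcard⟩
    have huw : u ≠ w := by rintro rfl; exact hne rfl
    rcases (hP.2.2.1 σ hσK _ hτ'K hστ').lt_or_eq with hf | hf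
    · exact .inl (by rwa [hfτ, ← hfσ])
    obtain ⟨-, hup⟩ :=
      hP.subset_interval_of_apply_eq hp hσK hτ'K hσK subset_rfl hστ' hpσ hσp hf
    refine (flexLT_iff_lexLT ?_ ?_).2 (lexLT_insert_insert hw huσ ?_)
    · rw [hfτ, ← hfσ, hf]
    · rw [Finset.card_insert_of_notMem hw, Finset.card_insert_of_notMem huσ]
    · exact hlt u (hup (Finset.mem_insert_self u σ)) (fun h => huσ (hpσ h)) huw

theorem apparentPair_insert_iff (hK : IsComplex K) (hP : IsMorsePartition K f P)
    (hp : p ∈ P) (hw : w ∉ σ) (hpσ : p.1 ⊆ σ) (hwp : insert w σ ⊆ p.2) :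
    ApparentPair K f σ (insert w σ) ↔ ∀ u ∈ p.2 \ p.1, w ≤ u :=
  ⟨forall_le_of_apparentPair_insert hK hP hp hw hpσ hwp,
    apparentPair_insert_of_forall_le hK hP hp hw hpσ hwp⟩

end

theorem stmt18_general (X : Type*) [LinearOrder X] (K : Set (Finset X))
    (hK : IsComplex K) (f : Finset X → ℝ) (P : Set (Finset X × Finset X))
    (hP : IsMorsePartition K f P) :
    ∀ σ τ : Finset X,
      (ApparentPair K f σ τ ∧ f σ = f τ) ↔ TildePair P σ τ := by
  intro σ τ
  constructor
  · rintro ⟨happ, hf⟩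
    obtain ⟨w, hw, rfl⟩ := Finset.exists_eq_insert_iff.2 ⟨happ.2.2.1, happ.2.2.2.1⟩
    obtain ⟨p, hp, hpσ, hwp⟩ := (hP.2.2.2 σ happ.1 _ happ.2.1 happ.2.2.1).1 hf
    have hwd : w ∈ p.2 \ p.1 :=
      Finset.mem_sdiff.2 ⟨hwp (Finset.mem_insert_self w σ), mt (@hpσ w) hw⟩
    refine ⟨p, hp, fun h => by simp [h] at hwd, insert w σ, w,
      hpσ.trans (Finset.subset_insert w σ), hwp, hwd,
      (apparentPair_insert_iff hK hP hp hw hpσ hwp).1 happ,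
      by rw [Finset.sdiff_singleton_eq_erase, Finset.erase_insert hw], by simp⟩
  · rintro ⟨p, hp, -, ψ, v, hpψ, hψp, hv, hvmin, rfl, rfl⟩
    obtain ⟨hvp, hvp'⟩ := Finset.mem_sdiff.1 hv
    have hψv : ψ ∪ {v} = insert v (ψ.erase v) := by grind
    have hpσ : p.1 ⊆ ψ.erase v := fun x hx => Finset.mem_erase.2 ⟨by grind, hpψ hx⟩
    have hτp : insert v (ψ.erase v) ⊆ p.2 :=
      Finset.insert_subset hvp ((ψ.erase_subset v).trans hψp)
    rw [Finset.sdiff_singleton_eq_erase, hψv]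
    refine ⟨(apparentPair_insert_iff hK hP hp (ψ.notMem_erase v) hpσ hτp).2 hvmin, ?_⟩
    rw [hP.apply_eq_of_mem_interval hK hp hpσ ((Finset.subset_insert v _).trans hτp),
      hP.apply_eq_of_mem_interval hK hp (hpσ.trans (Finset.subset_insert v _)) hτp]

/-- The zero persistence apparent pairs of the `f`-lexicographic order are exactly
the pairs of the minimal vertex refinement `Ṽ` of the discrete gradient of `f`. -/
theorem stmt18 (X : Type*) [LinearOrder X] [Fintype X] (K : Set (Finset X))
    (hK : IsComplex K) (f : Finset X → ℝ) (P : Set (Finset X × Finset X))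
    (hP : IsMorsePartition K f P) :
    ∀ σ τ : Finset X,
      (ApparentPair K f σ τ ∧ f σ = f τ) ↔ TildePair P σ τ :=
  stmt18_general X K hK f P hP
end

section
/- Let (V,d) be a finite tree metric space for a weighted tree T = (V,E), with vertices totally ordered compatibly with T (extending the partial order obtained by rooting T). Then for every u > t > 0 such that no tree edge has length in the interval (t, u], the Vietoris–Rips complex VR_u(V) collapses onto VR_t(V), which collapses onto the subforest T_t of tree edges of length at most t; in particular the persistent homology of the Vietoris–Rips filtration of V is trivial in all degrees > 0. -/
/-- The subforest `T_t`: the 1-dimensional subcomplex consisting of all vertices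
and the tree edges of length at most `t`. -/
def TreeComplex (V : Type*) [MetricSpace V] [DecidableEq V]
    (G : SimpleGraph V) (t : ℝ) : Set (Finset V) :=
  {σ | (∃ v : V, σ = {v}) ∨ ∃ a b : V, G.Adj a b ∧ dist a b ≤ t ∧ σ = {a, b}}

/-!
Add the vertices one at a time in increasing order. A vertex `m` other than the root has a parent
`p < m`, its unique smaller neighbour, and every smaller vertex `x` satisfies
`d(x, m) = d(x, p) + d(p, m)`, so `p` is closer than `m` to every smaller vertex. Hence the faces
at `m` that have to go (those of diameter `> t` in `VR_u`, resp. the faces of `VR_t` that are not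
tree edges) are matched with each other by adding or removing `p`, and collapsing these pairs from
the top dimension down removes them. The collapse of the complex on the smaller vertices, given by
induction, extends over the remaining faces at `m`, because these meet it only in faces that it
never removes.
-/

section Collapse

variable {X : Type*}

def IsDownClosed (K : Set (Finset X)) : Prop :=
  ∀ ρ ∈ K, ∀ σ ⊆ ρ, σ.Nonempty → σ ∈ K

def CollapsesAvoiding (P K L : Set (Finset X)) : Prop :=
  Relation.ReflTransGen (fun K L => ElemCollapse K L ∧ ∀ σ ∈ K, σ ∉ L → σ ∉ P) K L

variable {P K L M C D : Set (Finset X)}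

theorem ElemCollapse.union (h : ElemCollapse K L) (hP : ∀ σ ∈ K, σ ∉ L → σ ∉ P)
    (hCK : Disjoint C K) (hC : ∀ ρ ∈ C, ∀ σ ∈ K, σ ⊂ ρ → σ ∈ P) :
    ElemCollapse (K ∪ C) (L ∪ C) := by
  obtain ⟨σ, τ, hσ, hτ, hστ, hcard, hfree, rfl⟩ := h
  have hσP : σ ∉ P := hP σ hσ (by simp)
  have hσC : σ ∉ C := fun h => Set.disjoint_left.1 hCK h hσ
  have hτC : τ ∉ C := fun h => Set.disjoint_left.1 hCK h hτ
  refine ⟨σ, τ, Or.inl hσ, Or.inl hτ, hστ, hcard, ?_, ?_⟩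
  · rintro ρ (hρ | hρ) hσρ
    · exact hfree ρ hρ hσρ
    · exact absurd (hC ρ hρ σ hσ hσρ) hσP
  · ext ρ
    simp only [Set.mem_union, Set.mem_sdiff, Set.mem_insert_iff, Set.mem_singleton_iff]
    constructor
    · rintro (⟨hρ, hne⟩ | hρ)
      · exact ⟨Or.inl hρ, hne⟩
      · exact ⟨Or.inr hρ, by rintro (rfl | rfl) <;> contradiction⟩
    · rintro ⟨hρ | hρ, hne⟩
      exacts [Or.inl ⟨hρ, hne⟩, Or.inr hρ]

namespace CollapsesAvoiding

theorem collapses (h : CollapsesAvoiding P K L) : Collapses K L :=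
  Relation.ReflTransGen.mono (fun _ _ hKL => hKL.1) _ _ h

theorem trans (h : CollapsesAvoiding P K L) (h' : CollapsesAvoiding P L M) :
    CollapsesAvoiding P K M :=
  Relation.ReflTransGen.trans h h'

theorem subset (h : CollapsesAvoiding P K L) : L ⊆ K := by
  induction h with
  | refl => exact le_rfl
  | tail _ step ih =>
    obtain ⟨σ, τ, -, -, -, -, -, rfl⟩ := step.1
    exact Set.sdiff_subset.trans ih

/-- The faces of `K` below `C` lie in `P`, so they are never removed, and every face removed by
the collapse stays free in `K ∪ C`. -/
theorem union (h : CollapsesAvoiding P K L) (hCK : Disjoint C K)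
    (hC : ∀ ρ ∈ C, ∀ σ ∈ K, σ ⊂ ρ → σ ∈ P) : CollapsesAvoiding P (K ∪ C) (L ∪ C) := by
  induction h with
  | refl => exact .refl
  | tail hKL step ih =>
    have hLK := subset hKL
    refine ih.tail ⟨step.1.union step.2 (hCK.mono_right hLK) fun ρ hρ σ hσ => hC ρ hρ σ (hLK hσ),
      ?_⟩
    rintro σ (hσ | hσ) hσM
    · exact step.2 σ hσ fun h => hσM (Or.inl h)
    · exact absurd (Or.inr hσ) hσM

end CollapsesAvoiding

theorem IsDownClosed.diff_pair {σ τ : Finset X} (hK : IsDownClosed K) (hστ : σ ⊂ τ)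
    (hfree : ∀ ρ ∈ K, σ ⊂ ρ → ρ = τ) : IsDownClosed (K \ {σ, τ}) := by
  rintro ρ ⟨hρK, hρ⟩ σ' hσ'ρ hne
  refine ⟨hK ρ hρK σ' hσ'ρ hne, ?_⟩
  simp only [Set.mem_insert_iff, Set.mem_singleton_iff, not_or] at hρ
  rintro (rfl | rfl)
  · exact hρ.2 (hfree ρ hρK (hσ'ρ.ssubset_of_ne fun h => hρ.1 h.symm))
  · exact hρ.2 (hfree ρ hρK (hστ.trans_subset hσ'ρ))

variable [DecidableEq X]

/-- `D` is a union of pairs `{σ, insert p σ}` with `p ∉ σ`. -/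
structure IsPairedBy (p : X) (K D : Set (Finset X)) : Prop where
  subset : D ⊆ K
  insert_mem : ∀ σ ∈ D, insert p σ ∈ D
  erase_mem : ∀ σ ∈ D, σ.erase p ∈ D
  mem_of_ssubset : ∀ σ ∈ D, ∀ ρ ∈ K, σ ⊂ ρ → p ∉ ρ → ρ ∈ D

theorem Finset.erase_eq_iff_mem_pair {p : X} {σ ρ : Finset X} (hpσ : p ∉ σ) :
    ρ.erase p = σ ↔ ρ ∈ ({σ, insert p σ} : Set (Finset X)) := by
  simp only [Set.mem_insert_iff, Set.mem_singleton_iff]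
  by_cases hpρ : p ∈ ρ
  · rw [Finset.erase_eq_iff_eq_insert hpρ hpσ]
    exact ⟨Or.inr, fun h => h.resolve_left fun h => hpσ (h ▸ hpρ)⟩
  · rw [Finset.erase_eq_of_notMem hpρ]
    exact ⟨Or.inl, fun h => h.resolve_right fun h => hpρ (h ▸ Finset.mem_insert_self p σ)⟩

namespace IsPairedBy

variable {p : X} {σ : Finset X}

theorem diff_pair (hD : IsPairedBy p K D) (hpσ : p ∉ σ) :
    IsPairedBy p (K \ {σ, insert p σ}) (D \ {σ, insert p σ}) where
  subset := Set.sdiff_subset_sdiff_left hD.subset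
  insert_mem ρ hρ := ⟨hD.insert_mem ρ hρ.1, by
    rw [← Finset.erase_eq_iff_mem_pair hpσ, Finset.erase_insert_eq_erase,
      Finset.erase_eq_iff_mem_pair hpσ]
    exact hρ.2⟩
  erase_mem ρ hρ := ⟨hD.erase_mem ρ hρ.1, by
    rw [← Finset.erase_eq_iff_mem_pair hpσ, Finset.erase_idem, Finset.erase_eq_iff_mem_pair hpσ]
    exact hρ.2⟩
  mem_of_ssubset σ' hσ' ρ hρ hσ'ρ hpρ := ⟨hD.mem_of_ssubset σ' hσ'.1 ρ hρ.1 hσ'ρ hpρ, hρ.2⟩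

theorem eq_insert_of_ssubset (hK : IsDownClosed K) (hD : IsPairedBy p K D) (hσD : σ ∈ D)
    (hpσ : p ∉ σ) (hmax : ∀ ρ ∈ D, p ∉ ρ → ρ.card ≤ σ.card) :
    ∀ ρ ∈ K, σ ⊂ ρ → ρ = insert p σ := by
  intro ρ hρ hσρ
  have hsub : σ ⊆ ρ.erase p := Finset.subset_erase.2 ⟨hσρ.subset, hpσ⟩
  rcases hsub.ssubset_or_eq with hlt | heq
  · have hρ' : ρ.erase p ∈ K :=
      hK ρ hρ _ (Finset.erase_subset p ρ)
        (Finset.empty_ssubset.1 ((Finset.empty_subset σ).trans_ssubset hlt))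
    have hlt' := Finset.card_lt_card hlt
    have := hmax _ (hD.mem_of_ssubset σ hσD _ hρ' hlt (Finset.notMem_erase p ρ))
      (Finset.notMem_erase p ρ)
    omega
  · have := (Finset.erase_eq_iff_mem_pair hpσ).1 heq.symm
    exact this.resolve_left hσρ.ne'

/-- Remove the pairs `{σ, insert p σ}` in order of decreasing size: each is then a free pair. -/
theorem collapsesAvoiding (hK : IsDownClosed K) (hD : IsPairedBy p K D) (hfin : D.Finite)
    (hDP : Disjoint D P) : CollapsesAvoiding P K (K \ D) := by
  induction hn : D.ncard using Nat.strong_induction_on generalizing K D with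
  | _ n ih =>
  obtain rfl | ⟨σ₀, hσ₀⟩ := D.eq_empty_or_nonempty
  · rw [Set.sdiff_empty]
    exact .refl
  obtain ⟨σ, ⟨hσD, hpσ⟩, hmax⟩ := Set.exists_max_image {σ ∈ D | p ∉ σ} Finset.card
    (hfin.subset (Set.sep_subset _ _)) ⟨_, hD.erase_mem σ₀ hσ₀, Finset.notMem_erase p σ₀⟩
  have hpair : {σ, insert p σ} ⊆ D :=
    Set.insert_subset hσD (Set.singleton_subset_iff.2 (hD.insert_mem σ hσD))
  have hfree := hD.eq_insert_of_ssubset hK hσD hpσ fun ρ hρ hpρ => hmax ρ ⟨hρ, hpρ⟩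
  have hstep : ElemCollapse K (K \ {σ, insert p σ}) :=
    ⟨σ, _, hD.subset hσD, hD.subset (hD.insert_mem σ hσD), Finset.ssubset_insert hpσ,
      (Finset.card_insert_of_notMem hpσ).symm, hfree, rfl⟩
  have hlt : (D \ {σ, insert p σ}).ncard < n :=
    hn ▸ Set.ncard_lt_ncard (Set.sdiff_ssubset_left_iff.2 ⟨σ, hσD, Or.inl rfl⟩) hfin
  have hrest := ih _ hlt (hK.diff_pair (Finset.ssubset_insert hpσ) hfree) (hD.diff_pair hpσ)
    hfin.sdiff (hDP.mono_left Set.sdiff_subset) rfl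
  rw [Set.sdiff_sdiff, Set.union_sdiff_cancel hpair] at hrest
  refine Relation.ReflTransGen.head ⟨hstep, fun ρ hρ hρ' => ?_⟩ hrest
  exact Set.disjoint_left.1 hDP (hpair (not_not.1 fun h => hρ' ⟨hρ, h⟩))

end IsPairedBy

end Collapse

section Filtration

variable {X : Type*} {P A B : Set (Finset X)}

def fullSubcomplex (K : Set (Finset X)) (S : Finset X) : Set (Finset X) :=
  {σ ∈ K | σ ⊆ S}

theorem fullSubcomplex_eq_of_card_le_one {S : Finset X} (hBA : B ⊆ A)
    (hsmall : ∀ σ ∈ A, σ.card ≤ 1 → σ ∈ B) (hS : S.card ≤ 1) :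
    fullSubcomplex A S = fullSubcomplex B S :=
  Set.ext fun σ => ⟨fun ⟨hσ, hσS⟩ => ⟨hsmall σ hσ ((Finset.card_le_card hσS).trans hS), hσS⟩,
    fun ⟨hσ, hσS⟩ => ⟨hBA hσ, hσS⟩⟩

theorem IsDownClosed.fullSubcomplex (hA : IsDownClosed A) (S : Finset X) :
    IsDownClosed (fullSubcomplex A S) :=
  fun ρ hρ σ hσρ hσ => ⟨hA ρ hρ.1 σ hσρ hσ, hσρ.trans hρ.2⟩

section Insert

variable [DecidableEq X] {S : Finset X} {m p : X}

theorem isPairedBy_of_cone (hA : IsDownClosed A) (hB : IsDownClosed B) (hmS : m ∉ S)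
    (hpS : p ∈ S)
    (hins : ∀ σ ∈ fullSubcomplex A (insert m S), m ∈ σ → σ ∉ B → insert p σ ∈ A)
    (herase : ∀ σ ∈ fullSubcomplex A (insert m S), m ∈ σ → p ∈ σ → σ.erase p ∈ B → σ ∈ B) :
    IsPairedBy p (fullSubcomplex A (insert m S))
      {σ ∈ fullSubcomplex A (insert m S) | m ∈ σ ∧ σ ∉ B} where
  subset := Set.sep_subset _ _
  insert_mem := fun σ ⟨hσK, hmσ, hσB⟩ => by
    by_cases hpσ : p ∈ σ
    · rwa [Finset.insert_eq_of_mem hpσ]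
    refine ⟨⟨hins σ hσK hmσ hσB, Finset.insert_subset (Finset.mem_insert_of_mem hpS) hσK.2⟩,
      Finset.mem_insert_of_mem hmσ, fun h => hσB ?_⟩
    exact hB _ h σ (Finset.subset_insert p σ) ⟨m, hmσ⟩
  erase_mem := fun σ ⟨hσK, hmσ, hσB⟩ => by
    by_cases hpσ : p ∈ σ
    · have hm' : m ∈ σ.erase p := Finset.mem_erase.2 ⟨fun h => hmS (h ▸ hpS), hmσ⟩
      exact ⟨(hA.fullSubcomplex _) σ hσK _ (Finset.erase_subset p σ) ⟨m, hm'⟩, hm',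
        fun h => hσB (herase σ hσK hmσ hpσ h)⟩
    · rwa [Finset.erase_eq_of_notMem hpσ]
  mem_of_ssubset := fun σ ⟨_, hmσ, hσB⟩ ρ hρ hσρ _ =>
    ⟨hρ, hσρ.subset hmσ, fun h => hσB (hB ρ h σ hσρ.subset ⟨m, hmσ⟩)⟩

/-- Adding a vertex `m`: the faces at `m` of `A` not in `B` are paired off by `p`, and the
remaining faces at `m` are glued onto the smaller complex along faces in `P`. -/
theorem CollapsesAvoiding.fullSubcomplex_insert
    (hBA : B ⊆ A) (hA : IsDownClosed A) (hB : IsDownClosed B)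
    (hP : ∀ σ ∈ A, σ ∉ B → σ ∉ P) (hfaces : ∀ τ ∈ B, ∀ σ ∈ A, σ ⊂ τ → σ ∈ P)
    (hmS : m ∉ S) (hpS : p ∈ S)
    (hins : ∀ σ ∈ fullSubcomplex A (insert m S), m ∈ σ → σ ∉ B → insert p σ ∈ A)
    (herase : ∀ σ ∈ fullSubcomplex A (insert m S), m ∈ σ → p ∈ σ → σ.erase p ∈ B → σ ∈ B)
    (ih : CollapsesAvoiding P (fullSubcomplex A S) (fullSubcomplex B S)) :
    CollapsesAvoiding P (fullSubcomplex A (insert m S)) (fullSubcomplex B (insert m S)) := by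
  set K := fullSubcomplex A (insert m S)
  set D := {σ ∈ K | m ∈ σ ∧ σ ∉ B}
  set C := {σ ∈ fullSubcomplex B (insert m S) | m ∈ σ}
  have hDfin : D.Finite := (insert m S).powerset.finite_toSet.subset fun σ hσ =>
    Finset.mem_powerset.2 hσ.1.2
  have hKD : K \ D = fullSubcomplex A S ∪ C := by
    ext σ
    constructor
    · rintro ⟨⟨hσA, hσS⟩, hσD⟩
      by_cases hmσ : m ∈ σ
      · exact Or.inr ⟨⟨not_not.1 fun hσB => hσD ⟨⟨hσA, hσS⟩, hmσ, hσB⟩, hσS⟩, hmσ⟩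
      · exact Or.inl ⟨hσA, (Finset.subset_insert_iff_of_notMem hmσ).1 hσS⟩
    · rintro (⟨hσA, hσS⟩ | ⟨⟨hσB, hσS⟩, -⟩)
      · exact ⟨⟨hσA, hσS.trans (Finset.subset_insert m S)⟩, fun hσD => hmS (hσS hσD.2.1)⟩
      · exact ⟨⟨hBA hσB, hσS⟩, fun hσD => hσD.2.2 hσB⟩
  have hBC : fullSubcomplex B (insert m S) = fullSubcomplex B S ∪ C := by
    ext σ
    constructor
    · rintro ⟨hσB, hσS⟩
      by_cases hmσ : m ∈ σ
      · exact Or.inr ⟨⟨hσB, hσS⟩, hmσ⟩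
      · exact Or.inl ⟨hσB, (Finset.subset_insert_iff_of_notMem hmσ).1 hσS⟩
    · rintro (⟨hσB, hσS⟩ | ⟨hσ, -⟩)
      · exact ⟨hσB, hσS.trans (Finset.subset_insert m S)⟩
      · exact hσ
  have hCA : Disjoint C (fullSubcomplex A S) :=
    Set.disjoint_left.2 fun σ hσC hσA => hmS (hσA.2 hσC.2)
  rw [hBC]
  refine ((isPairedBy_of_cone hA hB hmS hpS hins herase).collapsesAvoiding
    (hA.fullSubcomplex _) hDfin
    (Set.disjoint_left.2 fun σ hσD => hP σ hσD.1.1 hσD.2.2)).trans ?_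
  rw [hKD]
  exact ih.union hCA fun τ hτ σ hσ => hfaces τ hτ.1.1 σ hσ.1

end Insert

theorem collapsesAvoiding_of_exists_cone [Fintype X] [LinearOrder X] (hBA : B ⊆ A)
    (hA : IsDownClosed A) (hB : IsDownClosed B) (hsmall : ∀ σ ∈ A, σ.card ≤ 1 → σ ∈ B)
    (hP : ∀ σ ∈ A, σ ∉ B → σ ∉ P) (hfaces : ∀ τ ∈ B, ∀ σ ∈ A, σ ⊂ τ → σ ∈ P)
    (hcone : ∀ x m : X, x < m → ∃ p < m,
      (∀ σ ∈ A, (∀ y ∈ σ, y ≤ m) → m ∈ σ → 1 < σ.card → insert p σ ∈ A) ∧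
      (∀ σ ∈ A, (∀ y ∈ σ, y ≤ m) → m ∈ σ → p ∈ σ → σ.erase p ∈ B → σ ∈ B)) :
    CollapsesAvoiding P A B := by
  suffices ∀ S : Finset X, IsLowerSet (S : Set X) →
      CollapsesAvoiding P (fullSubcomplex A S) (fullSubcomplex B S) by
    simpa [fullSubcomplex] using this Finset.univ (by simpa using isLowerSet_univ)
  intro S
  induction S using Finset.induction_on_max with
  | empty =>
    intro _
    rw [fullSubcomplex_eq_of_card_le_one hBA hsmall (by rw [Finset.card_empty]; exact zero_le_one)]
    exact .refl
  | insert m S hlt ih =>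
    intro hlow
    have hmS : m ∉ S := fun h => lt_irrefl m (hlt m h)
    have hle : ∀ σ ∈ fullSubcomplex A (insert m S), ∀ y ∈ σ, y ≤ m := fun σ hσ y hy =>
      (Finset.mem_insert.1 (hσ.2 hy)).elim le_of_eq fun hyS => (hlt y hyS).le
    obtain rfl | ⟨x, hx⟩ := S.eq_empty_or_nonempty
    · rw [fullSubcomplex_eq_of_card_le_one hBA hsmall (Finset.card_insert_le m ∅)]
      exact .refl
    obtain ⟨p, hpm, hins, herase⟩ := hcone x m (hlt x hx)
    have hpS : p ∈ S :=
      (Finset.mem_insert.1 (hlow hpm.le (Finset.mem_insert_self m S))).resolve_left hpm.ne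
    refine (ih fun a b hba ha => ?_).fullSubcomplex_insert hBA hA hB hP hfaces hmS hpS
      (fun σ hσ hmσ hσB => hins σ hσ.1 (hle σ hσ) hmσ ?_)
      (fun σ hσ => herase σ hσ.1 (hle σ hσ))
    · exact (Finset.mem_insert.1 (hlow hba (Finset.mem_insert_of_mem ha))).resolve_left
        (hba.trans_lt (hlt a ha)).ne
    · exact lt_of_not_ge fun h => hσB (hsmall σ hσ.1 h)

end Filtration

section VietorisRips

variable {X : Type*} [MetricSpace X]

theorem isDownClosed_VRComplex (s : ℝ) : IsDownClosed (VRComplex X s) :=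
  fun _ hρ _ hσρ hσ => ⟨hσ, fun x hx y hy => hρ.2 x (hσρ hx) y (hσρ hy)⟩

theorem VRComplex_mono {s s' : ℝ} (h : s ≤ s') : VRComplex X s ⊆ VRComplex X s' :=
  fun _ hσ => ⟨hσ.1, fun x hx y hy => (hσ.2 x hx y hy).trans h⟩

theorem mem_VRComplex_of_card_le_one {s : ℝ} {σ : Finset X} (hs : 0 ≤ s) (hσ : σ.Nonempty)
    (hcard : σ.card ≤ 1) : σ ∈ VRComplex X s :=
  ⟨hσ, fun x hx y hy => by rw [Finset.card_le_one.1 hcard x hx y hy, dist_self]; exact hs⟩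

theorem insert_mem_VRComplex_of_forall_dist_le [DecidableEq X] {s : ℝ} {σ : Finset X} {p : X}
    (hσ : σ ∈ VRComplex X s) (hp : ∀ y ∈ σ, dist p y ≤ s) : insert p σ ∈ VRComplex X s := by
  obtain ⟨z, hz⟩ := hσ.1
  have hs : 0 ≤ s := dist_self z ▸ hσ.2 z hz z hz
  refine ⟨Finset.insert_nonempty p σ, fun x hx y hy => ?_⟩
  rcases Finset.mem_insert.1 hx with hx | hx <;> rcases Finset.mem_insert.1 hy with hy | hy
  · rw [hx, hy, dist_self]; exact hs
  · rw [hx]; exact hp y hy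
  · rw [hy, dist_comm]; exact hp x hx
  · exact hσ.2 x hx y hy

end VietorisRips

section TreeComplex

variable {V : Type*} [MetricSpace V] [DecidableEq V] {G : SimpleGraph V} {t : ℝ}

theorem isDownClosed_treeComplex : IsDownClosed (TreeComplex V G t) := by
  have hsingle : ∀ v σ, σ ⊆ {v} → σ.Nonempty → σ ∈ TreeComplex V G t :=
    fun v _ h hne => Or.inl ⟨v, hne.subset_singleton_iff.1 h⟩
  rintro ρ (⟨v, rfl⟩ | ⟨a, b, hab, hdist, rfl⟩) σ hσρ hσ
  · exact hsingle v σ hσρ hσ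
  by_cases ha : a ∈ σ
  · by_cases hb : b ∈ σ
    · exact Or.inr ⟨a, b, hab, hdist,
        hσρ.antisymm (Finset.insert_subset ha (Finset.singleton_subset_iff.2 hb))⟩
    · rw [Finset.pair_comm, Finset.subset_insert_iff_of_notMem hb] at hσρ
      exact hsingle a σ hσρ hσ
  · rw [Finset.subset_insert_iff_of_notMem ha] at hσρ
    exact hsingle b σ hσρ hσ

theorem treeComplex_subset_VRComplex (ht : 0 ≤ t) : TreeComplex V G t ⊆ VRComplex V t := by
  rintro σ (⟨v, rfl⟩ | ⟨a, b, -, hdist, rfl⟩)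
  · exact mem_VRComplex_of_card_le_one ht (Finset.singleton_nonempty v)
      (Finset.card_singleton v).le
  · refine insert_mem_VRComplex_of_forall_dist_le
      (mem_VRComplex_of_card_le_one ht (Finset.singleton_nonempty b) (Finset.card_singleton b).le)
      fun y hy => ?_
    rwa [Finset.mem_singleton.1 hy]

theorem card_le_two_of_mem_treeComplex {σ : Finset V} (hσ : σ ∈ TreeComplex V G t) :
    σ.card ≤ 2 := by
  rcases hσ with ⟨v, rfl⟩ | ⟨a, b, -, -, rfl⟩
  · simp
  · exact Finset.card_le_two

end TreeComplex

section Parent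

variable {V : Type*} [MetricSpace V] [LinearOrder V]

structure IsParent (G : SimpleGraph V) (p m : V) : Prop where
  lt : p < m
  adj : G.Adj p m
  eq_of_adj : ∀ a, G.Adj a m → a < m → a = p
  dist_eq : ∀ y < m, dist y m = dist y p + dist p m

variable {G : SimpleGraph V} {s t : ℝ} {σ : Finset V} {p m : V}

theorem IsParent.insert_mem_VRComplex (hp : IsParent G p m) (hσ : σ ∈ VRComplex V s)
    (hle : ∀ y ∈ σ, y ≤ m) (hm : m ∈ σ) (hpm : dist p m ≤ s) : insert p σ ∈ VRComplex V s := by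
  refine insert_mem_VRComplex_of_forall_dist_le hσ fun y hy => ?_
  rcases (hle y hy).lt_or_eq with hym | rfl
  · rw [dist_comm]
    linarith [hp.dist_eq y hym, hσ.2 y hy m hm, dist_nonneg (x := p) (y := m)]
  · exact hpm

theorem IsParent.insert_mem_VRComplex_of_one_lt_card (hp : IsParent G p m)
    (hσ : σ ∈ VRComplex V s) (hle : ∀ y ∈ σ, y ≤ m) (hm : m ∈ σ) (hcard : 1 < σ.card) :
    insert p σ ∈ VRComplex V s := by
  obtain ⟨y, hy, hym⟩ := Finset.exists_mem_ne hcard m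
  refine hp.insert_mem_VRComplex hσ hle hm ?_
  linarith [hp.dist_eq y ((hle y hy).lt_of_ne hym), hσ.2 y hy m hm, dist_nonneg (x := y) (y := p)]

/-- The faces of `VR_u` outside `VR_t` can be removed: a face at `m` of diameter `> t` stays of
diameter `> t` when `p` is added or removed, since by the gap hypothesis `d(p, m) ≤ u`
forces `d(p, m) ≤ t`. -/
theorem VRComplex_collapsesAvoiding [Fintype V] {u : ℝ} (ht : 0 ≤ t) (htu : t ≤ u)
    (hparent : ∀ x m : V, x < m → ∃ p, IsParent G p m)
    (hgap : ∀ a b : V, G.Adj a b → ¬(t < dist a b ∧ dist a b ≤ u)) :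
    CollapsesAvoiding (VRComplex V t) (VRComplex V u) (VRComplex V t) := by
  refine collapsesAvoiding_of_exists_cone (VRComplex_mono htu) (isDownClosed_VRComplex u)
    (isDownClosed_VRComplex t) (fun σ hσ => mem_VRComplex_of_card_le_one ht hσ.1)
    (fun _ _ h => h) (fun τ hτ σ hσ hστ => isDownClosed_VRComplex t τ hτ σ hστ.subset hσ.1)
    fun x m hxm => ?_
  obtain ⟨p, hp⟩ := hparent x m hxm
  refine ⟨p, hp.lt, fun σ hσ hle hm => hp.insert_mem_VRComplex_of_one_lt_card hσ hle hm,
    fun σ hσ hle hm hpσ herase => ?_⟩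
  have hpm : dist p m ≤ t := not_lt.1 fun h => hgap p m hp.adj ⟨h, hσ.2 p hpσ m hm⟩
  rw [← Finset.insert_erase hpσ]
  exact hp.insert_mem_VRComplex herase (fun y hy => hle y (Finset.mem_of_mem_erase hy))
    (Finset.mem_erase.2 ⟨hp.adj.ne.symm, hm⟩) hpm

/-- Removing `p` from a face at `m` never yields a tree edge: the only tree edge at `m` towards
smaller vertices goes to `p`. -/
theorem IsParent.mem_treeComplex_of_erase (hp : IsParent G p m)
    (hσ : σ ∈ VRComplex V t) (hle : ∀ y ∈ σ, y ≤ m) (hm : m ∈ σ) (hpσ : p ∈ σ)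
    (herase : σ.erase p ∈ TreeComplex V G t) : σ ∈ TreeComplex V G t := by
  have hm' : m ∈ σ.erase p := Finset.mem_erase.2 ⟨hp.adj.ne.symm, hm⟩
  rcases herase with ⟨v, hv⟩ | ⟨a, b, hab, -, hab'⟩
  · rw [hv, Finset.mem_singleton] at hm'
    rw [← Finset.insert_erase hpσ, hv, ← hm']
    exact Or.inr ⟨p, m, hp.adj, hσ.2 p hpσ m hm, rfl⟩
  · have hnot : ∀ c ∈ σ.erase p, ¬ G.Adj c m := fun c hc hcm => Finset.ne_of_mem_erase hc
      (hp.eq_of_adj c hcm ((hle c (Finset.mem_of_mem_erase hc)).lt_of_ne hcm.ne))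
    rw [hab', Finset.mem_insert, Finset.mem_singleton] at hm'
    rcases hm' with rfl | rfl
    · exact absurd hab.symm (hnot b (hab' ▸ by simp))
    · exact absurd hab (hnot a (hab' ▸ by simp))

theorem treeComplex_collapsesAvoiding [Fintype V] (ht : 0 ≤ t)
    (hparent : ∀ x m : V, x < m → ∃ p, IsParent G p m) :
    CollapsesAvoiding {σ | σ.card ≤ 1} (VRComplex V t) (TreeComplex V G t) := by
  have hsmall : ∀ σ ∈ VRComplex V t, σ.card ≤ 1 → σ ∈ TreeComplex V G t := fun σ hσ hcard =>
    Or.inl (Finset.card_eq_one.1 (le_antisymm hcard hσ.1.card_pos))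
  refine collapsesAvoiding_of_exists_cone (treeComplex_subset_VRComplex ht)
    (isDownClosed_VRComplex t) isDownClosed_treeComplex hsmall
    (fun σ hσ hσT hcard => hσT (hsmall σ hσ hcard))
    (fun τ hτ σ _ hστ => Nat.le_of_lt_succ
      ((Finset.card_lt_card hστ).trans_le (card_le_two_of_mem_treeComplex hτ)))
    fun x m hxm => ?_
  obtain ⟨p, hp⟩ := hparent x m hxm
  exact ⟨p, hp.lt, fun σ hσ hle hm => hp.insert_mem_VRComplex_of_one_lt_card hσ hle hm,
    fun σ hσ hle hm hpσ herase => hp.mem_treeComplex_of_erase hσ hle hm hpσ herase⟩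

end Parent

section Tree

open SimpleGraph

variable {V : Type*} {G : SimpleGraph V}

theorem dist_eq_add_of_mem_support [MetricSpace V] (l : Sym2 V → ℝ)
    (hd : ∀ (x y : V) (p : G.Walk x y), p.IsPath → dist x y = (p.edges.map l).sum)
    {x y v : V} {q : G.Walk x y} (hq : q.IsPath) (hv : v ∈ q.support) :
    dist x y = dist x v + dist v y := by
  classical
  rw [hd x y q hq, hd x v (q.takeUntil v hv) (hq.takeUntil hv),
    hd v y (q.dropUntil v hv) (hq.dropUntil hv), ← List.sum_append,
    ← List.map_append, ← Walk.edges_append, Walk.take_spec]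

variable [LinearOrder V]

def IsCompatibleOrder (G : SimpleGraph V) (root : V) : Prop :=
  ∀ u w : V, (∃ p : G.Walk root w, p.IsPath ∧ u ∈ p.support) → u ≤ w

variable {root : V}

/-- The path from `x` to `y` runs inside the union of the paths from the root to `x` and `y`. -/
theorem le_max_of_mem_support (hT : G.IsTree) (hroot : IsCompatibleOrder G root)
    {x y v : V} {q : G.Walk x y} (hq : q.IsPath) (hv : v ∈ q.support) : v ≤ max x y := by
  classical
  obtain ⟨qx, hqx, -⟩ := hT.existsUnique_path root x
  obtain ⟨qy, hqy, -⟩ := hT.existsUnique_path root y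
  obtain ⟨_, -, huniq⟩ := hT.existsUnique_path x y
  rw [(huniq q hq).trans (huniq _ (qx.reverse.append qy).bypass_isPath).symm] at hv
  rcases (Walk.mem_support_append_iff _ _).1 (Walk.support_bypass_subset_support _ hv) with h | h
  · rw [Walk.support_reverse, List.mem_reverse] at h
    exact (hroot v x ⟨qx, hqx, h⟩).trans (le_max_left x y)
  · exact (hroot v y ⟨qy, hqy, h⟩).trans (le_max_right x y)

theorem exists_mem_support_adj_lt (hT : G.IsTree) (hroot : IsCompatibleOrder G root)
    {x m : V} (hxm : x < m) {q : G.Walk x m} (hq : q.IsPath) :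
    ∃ a ∈ q.support, G.Adj a m ∧ a < m := by
  have hadj : G.Adj q.penultimate m := Walk.adj_penultimate (Walk.not_nil_of_ne hxm.ne)
  have hmem : q.penultimate ∈ q.support := q.getVert_mem_support _
  refine ⟨_, hmem, hadj, lt_of_le_of_ne ?_ hadj.ne⟩
  simpa [max_eq_right hxm.le] using le_max_of_mem_support hT hroot hq hmem

theorem eq_of_adj_of_lt (hT : G.IsTree) (hroot : IsCompatibleOrder G root)
    {a b m : V} (ha : G.Adj a m) (hb : G.Adj b m) (ham : a < m) (hbm : b < m) : a = b := by
  by_contra hab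
  have hpath : (Walk.cons ha (Walk.cons hb.symm Walk.nil)).IsPath := by
    simp [ha.ne, hab, hb.ne.symm]
  exact (max_lt ham hbm).not_ge (le_max_of_mem_support hT hroot hpath (by simp))

theorem exists_isParent [MetricSpace V] (hT : G.IsTree) (hroot : IsCompatibleOrder G root)
    (l : Sym2 V → ℝ) (hd : ∀ (x y : V) (p : G.Walk x y), p.IsPath → dist x y = (p.edges.map l).sum)
    {x m : V} (hxm : x < m) : ∃ p, IsParent G p m := by
  obtain ⟨q, hq, -⟩ := hT.existsUnique_path x m
  obtain ⟨p, -, hpm, hplt⟩ := exists_mem_support_adj_lt hT hroot hxm hq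
  have huniq : ∀ a, G.Adj a m → a < m → a = p := fun a ha ham =>
    eq_of_adj_of_lt hT hroot ha hpm ham hplt
  refine ⟨p, hplt, hpm, huniq, fun y hym => ?_⟩
  obtain ⟨q', hq', -⟩ := hT.existsUnique_path y m
  obtain ⟨a, ha, ham, halt⟩ := exists_mem_support_adj_lt hT hroot hym hq'
  exact dist_eq_add_of_mem_support l hd hq' (huniq a ham halt ▸ ha)

end Tree

theorem stmt19_general (V : Type*) [MetricSpace V] [Fintype V] [LinearOrder V]
    (G : SimpleGraph V) (l : Sym2 V → ℝ) (hT : G.IsTree)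
    (hd : ∀ (x y : V) (p : G.Walk x y), p.IsPath → dist x y = (p.edges.map l).sum)
    (hcompat : ∃ root : V, ∀ u w : V,
      (∃ p : G.Walk root w, p.IsPath ∧ u ∈ p.support) → u ≤ w)
    (t u : ℝ) (ht : 0 < t) (htu : t < u)
    (hgap : ∀ a b : V, G.Adj a b → ¬(t < dist a b ∧ dist a b ≤ u)) :
    Collapses (VRComplex V u) (VRComplex V t) ∧
      Collapses (VRComplex V t) (TreeComplex V G t) := by
  obtain ⟨root, hroot⟩ := hcompat
  have hparent : ∀ x m : V, x < m → ∃ p, IsParent G p m :=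
    fun _ _ hxm => exists_isParent hT hroot l hd hxm
  exact ⟨(VRComplex_collapsesAvoiding ht.le htu.le hparent hgap).collapses,
    (treeComplex_collapsesAvoiding ht.le hparent).collapses⟩

/-- For a finite tree metric space with vertices totally ordered compatibly with the
tree, and `u > t > 0` such that no tree edge has length in `(t, u]`, the
Vietoris–Rips complex `VR_u(V)` collapses onto `VR_t(V)`, which collapses onto the
subforest `T_t` of tree edges of length at most `t` (hence the persistent homology
of the Vietoris–Rips filtration is trivial in degrees `> 0`). -/
theorem stmt19 (V : Type*) [MetricSpace V] [Fintype V] [LinearOrder V]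
    (G : SimpleGraph V) (l : Sym2 V → ℝ) (hT : G.IsTree)
    (hl : ∀ e ∈ G.edgeSet, 0 < l e)
    (hd : ∀ (x y : V) (p : G.Walk x y), p.IsPath → dist x y = (p.edges.map l).sum)
    (hcompat : ∃ root : V, ∀ u w : V,
      (∃ p : G.Walk root w, p.IsPath ∧ u ∈ p.support) → u ≤ w)
    (t u : ℝ) (ht : 0 < t) (htu : t < u)
    (hgap : ∀ a b : V, G.Adj a b → ¬(t < dist a b ∧ dist a b ≤ u)) :
    Collapses (VRComplex V u) (VRComplex V t) ∧
      Collapses (VRComplex V t) (TreeComplex V G t) :=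
  stmt19_general V G l hT hd hcompat t u ht htu hgap
end
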